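/- arXiv:2104.03246 — 2 statements merged into one kernel-verified Lean document; each statement's English description precedes it below -/
import Mathlib

section
/- For every a > 0 there is a constant C_a > 0 such that for every smooth divergence-free vector field u : 𝕋² → ℝ², one has |⟨∂₂u, ∂₂(u·∇u)⟩_{L²}| ≤ a ‖∂₁∂₂u‖²_{L²} + C_a (1 + ‖∂₁u‖²_{L²}) ‖∂₂u‖²_{L²}. -/
open MeasureTheory Real Complex Filter Set

noncomputable section

namespace Aniso

/-- Fundamental domain `(0, 2π]` for the circle of circumference `2π`. -/
def I2pi : Set ℝ := Set.Ioc 0 (2 * π)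

/-- Fundamental domain for the 2-torus `𝕋² = (ℝ/2πℤ)²`. -/
def Q2 : Set (ℝ × ℝ) := I2pi ×ˢ I2pi

/-- Integral over the torus of a real function. -/
def tintR (f : ℝ × ℝ → ℝ) : ℝ := ∫ x in Q2, f x

/-- Smoothness of a scalar field. -/
def Smooth (f : ℝ × ℝ → ℝ) : Prop := ContDiff ℝ (⊤ : ℕ∞) f

/-- Smoothness of a vector field. -/
def SmoothV (u : ℝ × ℝ → ℝ × ℝ) : Prop := ContDiff ℝ (⊤ : ℕ∞) u

/-- `2π`-periodicity in each variable: this encodes being a function on the torus. -/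
def Per (f : ℝ × ℝ → ℝ) : Prop :=
  (∀ x : ℝ × ℝ, f (x.1 + 2 * π, x.2) = f x) ∧ (∀ x : ℝ × ℝ, f (x.1, x.2 + 2 * π) = f x)

def PerV (u : ℝ × ℝ → ℝ × ℝ) : Prop :=
  Per (fun x => (u x).1) ∧ Per (fun x => (u x).2)

/-- Partial derivative in the horizontal variable `x₁`. -/
def pd1 (f : ℝ × ℝ → ℝ) : ℝ × ℝ → ℝ := fun x => fderiv ℝ f x (1, 0)

/-- Partial derivative in the vertical variable `x₂`. -/
def pd2 (f : ℝ × ℝ → ℝ) : ℝ × ℝ → ℝ := fun x => fderiv ℝ f x (0, 1)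

def comp1 (u : ℝ × ℝ → ℝ × ℝ) : ℝ × ℝ → ℝ := fun x => (u x).1
def comp2 (u : ℝ × ℝ → ℝ × ℝ) : ℝ × ℝ → ℝ := fun x => (u x).2

def pd1V (u : ℝ × ℝ → ℝ × ℝ) : ℝ × ℝ → ℝ × ℝ := fun x => (pd1 (comp1 u) x, pd1 (comp2 u) x)
def pd2V (u : ℝ × ℝ → ℝ × ℝ) : ℝ × ℝ → ℝ × ℝ := fun x => (pd2 (comp1 u) x, pd2 (comp2 u) x)

/-- Divergence-free condition `∂₁u¹ + ∂₂u² = 0`. -/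
def DivFree (u : ℝ × ℝ → ℝ × ℝ) : Prop :=
  ∀ x, pd1 (comp1 u) x + pd2 (comp2 u) x = 0

/-- The transport term `u·∇v`, with components `u¹∂₁vʲ + u²∂₂vʲ`. -/
def advect (u v : ℝ × ℝ → ℝ × ℝ) : ℝ × ℝ → ℝ × ℝ := fun x =>
  ((u x).1 * pd1 (comp1 v) x + (u x).2 * pd2 (comp1 v) x,
   (u x).1 * pd1 (comp2 v) x + (u x).2 * pd2 (comp2 v) x)

/-- L² inner product of real vector fields on the torus (summed over components). -/
def ipV (u v : ℝ × ℝ → ℝ × ℝ) : ℝ := tintR fun x => (u x).1 * (v x).1 + (u x).2 * (v x).2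

/-- The trilinear form `b(u,v,w) = ∫ (u·∇v)·w`. -/
def b3 (u v w : ℝ × ℝ → ℝ × ℝ) : ℝ := ipV (advect u v) w

/-- L² norm of a scalar function on the torus. -/
def L2 (f : ℝ × ℝ → ℝ) : ℝ := Real.sqrt (tintR fun x => f x ^ 2)

/-- L² norm of a vector field on the torus. -/
def L2V (u : ℝ × ℝ → ℝ × ℝ) : ℝ := Real.sqrt (tintR fun x => (u x).1 ^ 2 + (u x).2 ^ 2)

/-- Fourier coefficient of a complex-valued function on the torus. -/
def fcC (f : ℝ × ℝ → ℂ) (k : ℤ × ℤ) : ℂ :=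
  (1 / (2 * π) ^ 2 : ℂ) *
    ∫ x in Q2, f x * Complex.exp (-(Complex.I) * ((k.1 : ℂ) * (x.1 : ℂ) + (k.2 : ℂ) * (x.2 : ℂ)))

/-- Fourier coefficient of a real-valued function on the torus. -/
def fc (f : ℝ × ℝ → ℝ) (k : ℤ × ℤ) : ℂ := fcC (fun x => (f x : ℂ)) k

/-- Anisotropic Sobolev weight `(1+|k₁|²)^s (1+|k₂|²)^{s'}`. -/
def aw (s s' : ℝ) (k : ℤ × ℤ) : ℝ :=
  (1 + (k.1 : ℝ) ^ 2) ^ s * (1 + (k.2 : ℝ) ^ 2) ^ s'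

/-- Square of the anisotropic Sobolev norm `H^{s,s'}` of a scalar function. -/
def HSq (s s' : ℝ) (f : ℝ × ℝ → ℝ) : ℝ := ∑' k : ℤ × ℤ, aw s s' k * ‖fc f k‖ ^ 2

/-- Anisotropic Sobolev norm `H^{s,s'}` of a scalar function. -/
def HN (s s' : ℝ) (f : ℝ × ℝ → ℝ) : ℝ := Real.sqrt (HSq s s' f)

/-- Anisotropic Sobolev norm `H^{s,s'}` of a vector field. -/
def HNV (s s' : ℝ) (u : ℝ × ℝ → ℝ × ℝ) : ℝ :=
  Real.sqrt (HSq s s' (comp1 u) + HSq s s' (comp2 u))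

/-- Mixed norm `L^∞_h(L²_v)`. -/
def LinfhL2v (f : ℝ × ℝ → ℝ) : ℝ :=
  essSup (fun x1 : ℝ => Real.sqrt (∫ x2 in I2pi, f (x1, x2) ^ 2)) (volume.restrict I2pi)

/-- Mixed norm `L²_h(L^∞_v)`. -/
def L2hLinfv (f : ℝ × ℝ → ℝ) : ℝ :=
  Real.sqrt (∫ x1 in I2pi, (essSup (fun x2 : ℝ => |f (x1, x2)|) (volume.restrict I2pi)) ^ 2)

/-- Mixed norm `L²_v(L^{4/3}_h)`. -/
def L2vL43h {E : Type*} [NormedAddCommGroup E] (f : ℝ × ℝ → E) : ℝ :=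
  Real.sqrt (∫ x2 in I2pi, (∫ x1 in I2pi, ‖f (x1, x2)‖ ^ ((4 : ℝ)/3)) ^ ((3 : ℝ)/2))

/-- Mixed norm `L^∞_v(L²_h)`. -/
def LinfvL2h {E : Type*} [NormedAddCommGroup E] (f : ℝ × ℝ → E) : ℝ :=
  essSup (fun x2 : ℝ => Real.sqrt (∫ x1 in I2pi, ‖f (x1, x2)‖ ^ 2)) (volume.restrict I2pi)

/-- Mixed norm `L²_v(L⁴_h)`. -/
def L2vL4h {E : Type*} [NormedAddCommGroup E] (f : ℝ × ℝ → E) : ℝ :=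
  Real.sqrt (∫ x2 in I2pi, Real.sqrt (∫ x1 in I2pi, ‖f (x1, x2)‖ ^ 4))

/-- One-dimensional Fourier coefficient on the circle of circumference `2π`. -/
def fc1 (g : ℝ → ℂ) (n : ℤ) : ℂ :=
  (1 / (2 * π) : ℂ) * ∫ x in I2pi, g x * Complex.exp (-(Complex.I) * ((n : ℂ) * (x : ℂ)))

/-- Square of the 1-d Sobolev norm `H^s(𝕋)`. -/
def H1Sq (s : ℝ) (g : ℝ → ℂ) : ℝ := ∑' n : ℤ, (1 + (n : ℝ) ^ 2) ^ s * ‖fc1 g n‖ ^ 2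

/-- Mixed norm `L²_v(H^s_h)`. -/
def L2vHsh (s : ℝ) (f : ℝ × ℝ → ℂ) : ℝ :=
  Real.sqrt (∫ x2 in I2pi, H1Sq s (fun x1 => f (x1, x2)))

/-- A dyadic partition of unity `(χ, θ)` on `ℝ`. -/
structure IsDyadicPartition (χ θ : ℝ → ℝ) : Prop where
  smooth_chi : ContDiff ℝ (⊤ : ℕ∞) χ
  smooth_theta : ContDiff ℝ (⊤ : ℕ∞) θ
  nonneg_chi : ∀ z, 0 ≤ χ z
  nonneg_theta : ∀ z, 0 ≤ θ z
  even_chi : ∀ z, χ (-z) = χ z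
  even_theta : ∀ z, θ (-z) = θ z
  chi_support : ∃ R > 0, ∀ z, R ≤ |z| → χ z = 0
  theta_support : ∃ r R : ℝ, 0 < r ∧ r < R ∧ ∀ z, (|z| < r ∨ R < |z|) → θ z = 0
  partition : ∀ z : ℝ, χ z + ∑' j : ℕ, θ ((2 : ℝ) ^ (-(j : ℤ)) * z) = 1
  chi_theta_disj : ∀ j : ℕ, 1 ≤ j → ∀ z, χ z * θ ((2 : ℝ) ^ (-(j : ℤ)) * z) = 0
  theta_theta_disj : ∀ i j : ℕ, 1 < |(i : ℤ) - (j : ℤ)| → ∀ z,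
    θ ((2 : ℝ) ^ (-(i : ℤ)) * z) * θ ((2 : ℝ) ^ (-(j : ℤ)) * z) = 0

/-- The Fourier multiplier symbol of the vertical Littlewood–Paley block `Δ^v_j`. -/
def blockSymb (χ θ : ℝ → ℝ) (j : ℤ) (z : ℝ) : ℝ :=
  if j = -1 then χ |z| else if 0 ≤ j then θ ((2 : ℝ) ^ (-j) * |z|) else 0

/-- The Fourier multiplier symbol of the vertical low-frequency cut-off `S^v_j`. -/
def lowSymb (χ θ : ℝ → ℝ) (j : ℤ) (z : ℝ) : ℝ :=
  ∑ j' ∈ Finset.Icc (-1 : ℤ) (j - 2), blockSymb χ θ j' z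

/-- The character `e^{ik·x}`. -/
def eK (k : ℤ × ℤ) (x : ℝ × ℝ) : ℂ :=
  Complex.exp (Complex.I * ((k.1 : ℂ) * (x.1 : ℂ) + (k.2 : ℂ) * (x.2 : ℂ)))

/-- Vertical Littlewood–Paley block `Δ^v_j` of a complex-valued function. -/
def LPC (χ θ : ℝ → ℝ) (j : ℤ) (f : ℝ × ℝ → ℂ) : ℝ × ℝ → ℂ :=
  fun x => ∑' k : ℤ × ℤ, (blockSymb χ θ j k.2 : ℂ) * fcC f k * eK k x

/-- Vertical Littlewood–Paley block `Δ^v_j` of a real-valued function. -/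
def LP (χ θ : ℝ → ℝ) (j : ℤ) (f : ℝ × ℝ → ℝ) : ℝ × ℝ → ℂ :=
  LPC χ θ j fun x => (f x : ℂ)

/-- Vertical low-frequency cut-off `S^v_j` of a complex-valued function. -/
def SvC (χ θ : ℝ → ℝ) (j : ℤ) (f : ℝ × ℝ → ℂ) : ℝ × ℝ → ℂ :=
  fun x => ∑' k : ℤ × ℤ, (lowSymb χ θ j k.2 : ℂ) * fcC f k * eK k x

/-- Vertical low-frequency cut-off `S^v_j` of a real-valued function. -/
def Sv (χ θ : ℝ → ℝ) (j : ℤ) (f : ℝ × ℝ → ℝ) : ℝ × ℝ → ℂ :=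
  SvC χ θ j fun x => (f x : ℂ)

/-- Componentwise Littlewood–Paley block of a vector field. -/
def LPV (χ θ : ℝ → ℝ) (j : ℤ) (u : ℝ × ℝ → ℝ × ℝ) : ℝ × ℝ → ℂ × ℂ :=
  fun x => (LP χ θ j (comp1 u) x, LP χ θ j (comp2 u) x)

/-- Componentwise low-frequency cut-off of a vector field. -/
def SvV (χ θ : ℝ → ℝ) (j : ℤ) (u : ℝ × ℝ → ℝ × ℝ) : ℝ × ℝ → ℂ × ℂ :=
  fun x => (Sv χ θ j (comp1 u) x, Sv χ θ j (comp2 u) x)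

/-- L² inner product of complex-valued functions on the torus. -/
def ipC (f g : ℝ × ℝ → ℂ) : ℂ := ∫ x in Q2, f x * (starRingEnd ℂ) (g x)

/-- L² inner product of complex vector fields on the torus (summed over components). -/
def ipCV (f g : ℝ × ℝ → ℂ × ℂ) : ℂ :=
  ∫ x in Q2, ((f x).1 * (starRingEnd ℂ) ((g x).1) + (f x).2 * (starRingEnd ℂ) ((g x).2))

/-- The vertical paraproduct `T^v_a g = Σ_j S^v_{j-1}a · Δ^v_j g`. -/
def Tv (χ θ : ℝ → ℝ) (a g : ℝ × ℝ → ℝ) : ℝ × ℝ → ℂ :=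
  fun x => ∑' j : ℤ, Sv χ θ (j - 1) a x * LP χ θ j g x

/-- The vertical remainder `R^v(a,g) = Σ_{|j-j'|≤1} Δ^v_j a · Δ^v_{j'} g`. -/
def Rv (χ θ : ℝ → ℝ) (a g : ℝ × ℝ → ℝ) : ℝ × ℝ → ℂ :=
  fun x => ∑' p : ℤ × ℤ, if |p.1 - p.2| ≤ 1 then LP χ θ p.1 a x * LP χ θ p.2 g x else 0


-- smoothness of pd1/pd2

lemma Smooth.pd1 {f : ℝ × ℝ → ℝ} (hf : Smooth f) : Smooth (pd1 f) := by
  have h := hf.fderiv_right (m := (⊤ : ℕ∞)) (by simp)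
  exact h.clm_apply contDiff_const

lemma Smooth.pd2 {f : ℝ × ℝ → ℝ} (hf : Smooth f) : Smooth (pd2 f) := by
  have h := hf.fderiv_right (m := (⊤ : ℕ∞)) (by simp)
  exact h.clm_apply contDiff_const

lemma Smooth.cont {f : ℝ × ℝ → ℝ} (hf : Smooth f) : Continuous f := hf.continuous

-- product rules

lemma pd1_mul {f g : ℝ × ℝ → ℝ} (hf : Smooth f) (hg : Smooth g) (x : ℝ × ℝ) :
    pd1 (fun y => f y * g y) x = pd1 f x * g x + f x * pd1 g x := by
  have hfd : DifferentiableAt ℝ f x := hf.differentiable (by simp) |>.differentiableAt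
  have hgd : DifferentiableAt ℝ g x := hg.differentiable (by simp) |>.differentiableAt
  simp [pd1, fderiv_fun_mul hfd hgd, mul_comm]
  ring

lemma pd2_mul {f g : ℝ × ℝ → ℝ} (hf : Smooth f) (hg : Smooth g) (x : ℝ × ℝ) :
    pd2 (fun y => f y * g y) x = pd2 f x * g x + f x * pd2 g x := by
  have hfd : DifferentiableAt ℝ f x := hf.differentiable (by simp) |>.differentiableAt
  have hgd : DifferentiableAt ℝ g x := hg.differentiable (by simp) |>.differentiableAt
  simp [pd2, fderiv_fun_mul hfd hgd, mul_comm]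
  ring

-- symmetry of second derivatives

lemma pd1_pd2 {f : ℝ × ℝ → ℝ} (hf : Smooth f) (x : ℝ × ℝ) :
    pd1 (pd2 f) x = pd2 (pd1 f) x := by
  have hd : Differentiable ℝ f := hf.differentiable (by simp)
  have hfd : Differentiable ℝ (fderiv ℝ f) :=
    (hf.fderiv_right (m := 1) (WithTop.coe_le_coe.mpr le_top)).differentiable (by simp)
  have h1 : pd1 (pd2 f) x = (fderiv ℝ (fderiv ℝ f) x (1,0)) (0,1) := by
    have := fderiv_clm_apply (x := x) (c := fderiv ℝ f) (u := fun _ => ((0:ℝ),(1:ℝ)))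
      (hfd.differentiableAt) (differentiableAt_const _)
    show fderiv ℝ (fun y => fderiv ℝ f y (0,1)) x (1, 0) = _
    rw [this]
    simp
  have h2 : pd2 (pd1 f) x = (fderiv ℝ (fderiv ℝ f) x (0,1)) (1,0) := by
    have := fderiv_clm_apply (x := x) (c := fderiv ℝ f) (u := fun _ => ((1:ℝ),(0:ℝ)))
      (hfd.differentiableAt) (differentiableAt_const _)
    show fderiv ℝ (fun y => fderiv ℝ f y (1,0)) x (0, 1) = _
    rw [this]
    simp
  rw [h1, h2]
  exact second_derivative_symmetric (fun y => (hd y).hasFDerivAt)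
    (hfd.differentiableAt).hasFDerivAt _ _

lemma two_pi_pos : (0:ℝ) < 2 * π := by positivity

-- Cauchy-Schwarz for integrals

lemma integral_cs {α : Type*} [MeasurableSpace α] (μ : Measure α) (f g : α → ℝ)
    (hf : Integrable (fun x => f x ^ 2) μ) (hg : Integrable (fun x => g x ^ 2) μ)
    (hfg : Integrable (fun x => f x * g x) μ) :
    ∫ x, f x * g x ∂μ ≤ Real.sqrt (∫ x, f x ^ 2 ∂μ) * Real.sqrt (∫ x, g x ^ 2 ∂μ) := by
  set A := ∫ x, f x ^ 2 ∂μ with hA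
  set B := ∫ x, f x * g x ∂μ with hB
  set C := ∫ x, g x ^ 2 ∂μ with hC
  have hA0 : 0 ≤ A := integral_nonneg fun x => sq_nonneg _
  have hC0 : 0 ≤ C := integral_nonneg fun x => sq_nonneg _
  have key : ∀ t : ℝ, 0 ≤ t ^ 2 * A - 2 * t * B + C := by
    intro t
    have h1 : Integrable (fun x => (t * f x - g x) ^ 2) μ := by
      have : (fun x => (t * f x - g x) ^ 2)
          = fun x => t ^ 2 * f x ^ 2 - 2 * t * (f x * g x) + g x ^ 2 := by
        funext x; ring
      rw [this]
      exact ((hf.const_mul _).sub (hfg.const_mul _)).add hg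
    have h2 : 0 ≤ ∫ x, (t * f x - g x) ^ 2 ∂μ := integral_nonneg fun x => sq_nonneg _
    have h3 : ∫ x, (t * f x - g x) ^ 2 ∂μ = t ^ 2 * A - 2 * t * B + C := by
      have : (fun x => (t * f x - g x) ^ 2)
          = fun x => t ^ 2 * f x ^ 2 - 2 * t * (f x * g x) + g x ^ 2 := by
        funext x; ring
      rw [this, integral_add (by exact (hf.const_mul _).sub (hfg.const_mul _)) hg,
        integral_sub (hf.const_mul _) (hfg.const_mul _), integral_const_mul, integral_const_mul]
    linarith [h2, h3.symm ▸ h2, h3 ▸ h2]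
  have hBsq : B ^ 2 ≤ A * C := by
    rcases eq_or_lt_of_le hA0 with h | h
    · -- A = 0 : need B = 0
      have hB0 : B = 0 := by
        by_contra hne
        have := key ((C + 1) / (2 * B))
        rw [← h] at this
        have he : 2 * ((C + 1) / (2 * B)) * B = C + 1 := by
          rw [show 2 * ((C + 1) / (2 * B)) * B = (C + 1) / (2 * B) * (2 * B) by ring]
          exact div_mul_cancel₀ _ (mul_ne_zero two_ne_zero hne)
        rw [he] at this
        linarith
      rw [hB0, ← h]
      norm_num
    · have := key (B / A)
      have h2 : (B / A) ^ 2 * A - 2 * (B / A) * B + C = C - B ^ 2 / A := by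
        field_simp; ring
      rw [h2] at this
      have h3 : B ^ 2 / A ≤ C := by linarith
      rw [div_le_iff₀ h] at h3
      nlinarith [h3]
  calc B ≤ |B| := le_abs_self B
    _ = Real.sqrt (B ^ 2) := (Real.sqrt_sq_eq_abs B).symm
    _ ≤ Real.sqrt (A * C) := Real.sqrt_le_sqrt hBsq
    _ = Real.sqrt A * Real.sqrt C := Real.sqrt_mul hA0 C

lemma measurableSet_Q2 : MeasurableSet Q2 := measurableSet_Ioc.prod measurableSet_Ioc

lemma integrableOn_Q2 {f : ℝ × ℝ → ℝ} (hf : Continuous f) : IntegrableOn f Q2 := by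
  have h1 : IntegrableOn f (Set.Icc ((0:ℝ),(0:ℝ)) (2*π, 2*π)) :=
    hf.continuousOn.integrableOn_compact isCompact_Icc
  apply h1.mono_set
  rw [Set.Icc_prod_eq]
  exact Set.prod_mono Set.Ioc_subset_Icc_self Set.Ioc_subset_Icc_self

lemma restrict_Q2 : (volume : Measure (ℝ × ℝ)).restrict Q2 =
    ((volume : Measure ℝ).restrict I2pi).prod ((volume : Measure ℝ).restrict I2pi) := by
  rw [Measure.prod_restrict, ← Measure.volume_eq_prod]; rfl

lemma integrableOn_Q2' {f : ℝ × ℝ → ℝ} (hf : Continuous f) :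
    Integrable (Function.uncurry fun x₁ x₂ => f (x₁, x₂))
      (((volume : Measure ℝ).restrict I2pi).prod ((volume : Measure ℝ).restrict I2pi)) := by
  rw [← restrict_Q2]
  exact integrableOn_Q2 hf

lemma integral_Q2_eq_iterated {f : ℝ × ℝ → ℝ} (hf : Continuous f) :
    ∫ x in Q2, f x = ∫ x₁ in I2pi, ∫ x₂ in I2pi, f (x₁, x₂) := by
  have : (∫ x in Q2, f x) = ∫ x, f x ∂(((volume : Measure ℝ).restrict I2pi).prod
      ((volume : Measure ℝ).restrict I2pi)) := by rw [← restrict_Q2]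
  rw [this]
  exact MeasureTheory.integral_prod f (integrableOn_Q2' hf)

lemma integral_Q2_eq_iterated' {f : ℝ × ℝ → ℝ} (hf : Continuous f) :
    ∫ x in Q2, f x = ∫ x₂ in I2pi, ∫ x₁ in I2pi, f (x₁, x₂) := by
  rw [integral_Q2_eq_iterated hf]
  exact integral_integral_swap (integrableOn_Q2' hf)

-- slice derivatives

lemma hasDerivAt_slice1 {f : ℝ × ℝ → ℝ} (hf : Smooth f) (x₂ t : ℝ) :
    HasDerivAt (fun s => f (s, x₂)) (pd1 f (t, x₂)) t := by
  have hfd : HasFDerivAt f (fderiv ℝ f (t, x₂)) (t, x₂) :=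
    (hf.differentiable (by simp) (t, x₂)).hasFDerivAt
  have hL : HasDerivAt (fun s : ℝ => (s, x₂)) ((1:ℝ), (0:ℝ)) t := by
    simpa using (hasDerivAt_id t).prodMk (hasDerivAt_const t x₂)
  exact hfd.comp_hasDerivAt t hL

lemma hasDerivAt_slice2 {f : ℝ × ℝ → ℝ} (hf : Smooth f) (x₁ t : ℝ) :
    HasDerivAt (fun s => f (x₁, s)) (pd2 f (x₁, t)) t := by
  have hfd : HasFDerivAt f (fderiv ℝ f (x₁, t)) (x₁, t) :=
    (hf.differentiable (by simp) (x₁, t)).hasFDerivAt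
  have hL : HasDerivAt (fun s : ℝ => (x₁, s)) ((0:ℝ), (1:ℝ)) t := by
    simpa using (hasDerivAt_const t x₁).prodMk (hasDerivAt_id t)
  exact hfd.comp_hasDerivAt t hL

-- zero integral of derivative of periodic function

lemma integral_pd1_eq_zero {f : ℝ × ℝ → ℝ} (hf : Smooth f) (hp : Per f) :
    ∫ x in Q2, pd1 f x = 0 := by
  rw [integral_Q2_eq_iterated' hf.pd1.cont]
  have inner : ∀ x₂ : ℝ, ∫ x₁ in I2pi, pd1 f (x₁, x₂) = 0 := by
    intro x₂
    have h1 : ∫ x₁ in I2pi, pd1 f (x₁, x₂) = ∫ t in (0:ℝ)..(2*π), pd1 f (t, x₂) := by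
      rw [intervalIntegral.integral_of_le two_pi_pos.le]; rfl
    rw [h1]
    have h2 : ∫ t in (0:ℝ)..(2*π), pd1 f (t, x₂)
        = ∫ t in (0:ℝ)..(2*π), deriv (fun s => f (s, x₂)) t := by
      apply intervalIntegral.integral_congr
      intro t _
      exact ((hasDerivAt_slice1 hf x₂ t).deriv).symm
    rw [h2, intervalIntegral.integral_deriv_eq_sub]
    · have := hp.1 (0, x₂)
      simp at this
      rw [this]; ring
    · exact fun t _ => (hasDerivAt_slice1 hf x₂ t).differentiableAt
    · apply Continuous.intervalIntegrable
      have : (deriv fun s => f (s, x₂)) = fun t => pd1 f (t, x₂) := by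
        funext t; exact (hasDerivAt_slice1 hf x₂ t).deriv
      rw [this]
      exact hf.pd1.cont.comp (continuous_id.prodMk continuous_const)
  simp [inner]

lemma integral_pd2_eq_zero {f : ℝ × ℝ → ℝ} (hf : Smooth f) (hp : Per f) :
    ∫ x in Q2, pd2 f x = 0 := by
  rw [integral_Q2_eq_iterated hf.pd2.cont]
  have inner : ∀ x₁ : ℝ, ∫ x₂ in I2pi, pd2 f (x₁, x₂) = 0 := by
    intro x₁
    have h1 : ∫ x₂ in I2pi, pd2 f (x₁, x₂) = ∫ t in (0:ℝ)..(2*π), pd2 f (x₁, t) := by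
      rw [intervalIntegral.integral_of_le two_pi_pos.le]; rfl
    rw [h1]
    have h2 : ∫ t in (0:ℝ)..(2*π), pd2 f (x₁, t)
        = ∫ t in (0:ℝ)..(2*π), deriv (fun s => f (x₁, s)) t := by
      apply intervalIntegral.integral_congr
      intro t _
      exact ((hasDerivAt_slice2 hf x₁ t).deriv).symm
    rw [h2, intervalIntegral.integral_deriv_eq_sub]
    · have := hp.2 (x₁, 0)
      simp at this
      rw [this]; ring
    · exact fun t _ => (hasDerivAt_slice2 hf x₁ t).differentiableAt
    · apply Continuous.intervalIntegrable
      have : (deriv fun s => f (x₁, s)) = fun t => pd2 f (x₁, t) := by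
        funext t; exact (hasDerivAt_slice2 hf x₁ t).deriv
      rw [this]
      exact hf.pd2.cont.comp (continuous_const.prodMk continuous_id)
  simp [inner]

lemma ftc_diff {φ φ' : ℝ → ℝ} (hd : ∀ t, HasDerivAt φ (φ' t) t) (hc' : Continuous φ')
    {x y : ℝ} (hx : x ∈ I2pi) (hy : y ∈ I2pi) :
    φ x - φ y ≤ ∫ t in I2pi, |φ' t| := by
  have habs : ∀ {c d : ℝ}, c ∈ I2pi → d ∈ I2pi → c ≤ d →
      ∫ t in c..d, |φ' t| ≤ ∫ t in I2pi, |φ' t| := by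
    intro c d hc hd' hcd
    rw [intervalIntegral.integral_of_le hcd]
    apply setIntegral_mono_set ((continuous_abs.comp hc').integrableOn_Ioc)
    · exact Filter.Eventually.of_forall fun t => abs_nonneg _
    · apply HasSubset.Subset.eventuallyLE
      intro t ht
      exact ⟨lt_of_lt_of_le hc.1 ht.1.le, le_trans ht.2 hd'.2⟩
  have h1 : φ x - φ y = ∫ t in y..x, φ' t :=
    (intervalIntegral.integral_eq_sub_of_hasDerivAt (fun t _ => hd t)
      (hc'.intervalIntegrable _ _)).symm
  rcases le_total y x with h | h
  · rw [h1]
    calc ∫ t in y..x, φ' t ≤ ∫ t in y..x, |φ' t| := by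
          apply intervalIntegral.integral_mono_on h (hc'.intervalIntegrable _ _)
            ((continuous_abs.comp hc').intervalIntegrable _ _)
          intro t _; exact le_abs_self _
      _ ≤ _ := habs hy hx h
  · rw [h1, intervalIntegral.integral_symm]
    calc -(∫ t in x..y, φ' t) ≤ ∫ t in x..y, |φ' t| := by
          have : -(∫ t in x..y, φ' t) = ∫ t in x..y, -φ' t := by
            rw [intervalIntegral.integral_neg]
          rw [this]
          apply intervalIntegral.integral_mono_on h ((hc'.neg).intervalIntegrable _ _)
            ((continuous_abs.comp hc').intervalIntegrable _ _)
          intro t _; exact neg_le_abs _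
      _ ≤ _ := habs hx hy h

lemma avg_bound {ψ : ℝ → ℝ} (V : ℝ) (hψ : IntegrableOn ψ I2pi)
    (hdiff : ∀ x ∈ I2pi, ∀ y ∈ I2pi, ψ x - ψ y ≤ V) :
    ∀ x ∈ I2pi, ψ x ≤ (2*π)⁻¹ * (∫ t in I2pi, ψ t) + V := by
  intro x hx
  have hvol : (volume I2pi).toReal = 2 * π := by
    rw [I2pi, Real.volume_Ioc]
    simp [two_pi_pos.le]
    exact Real.pi_pos.le
  have h1 : ∫ (_ : ℝ) in I2pi, ψ x = (2*π) * ψ x := by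
    rw [setIntegral_const, measureReal_def, hvol, smul_eq_mul]
  have h2 : (∫ (_ : ℝ) in I2pi, ψ x) ≤ ∫ y in I2pi, (ψ y + V) := by
    apply setIntegral_mono_on (integrableOn_const (by rw [I2pi, Real.volume_Ioc]; exact ENNReal.ofReal_ne_top))
      (hψ.add (integrableOn_const (by rw [I2pi, Real.volume_Ioc]; exact ENNReal.ofReal_ne_top)))
      measurableSet_Ioc
    intro y hy
    show ψ x ≤ ψ y + V
    linarith [hdiff x hx y hy]
  rw [h1] at h2
  have h3 : ∫ y in I2pi, (ψ y + V) = (∫ t in I2pi, ψ t) + (2*π) * V := by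
    rw [integral_add hψ (integrableOn_const (by rw [I2pi, Real.volume_Ioc]; exact ENNReal.ofReal_ne_top))]
    rw [setIntegral_const, measureReal_def, hvol, smul_eq_mul]
  rw [h3] at h2
  have hpi : (0:ℝ) < 2*π := two_pi_pos
  have := mul_le_mul_of_nonneg_left h2 (le_of_lt (inv_pos.2 hpi))
  calc ψ x = (2*π)⁻¹ * ((2*π) * ψ x) := by field_simp
    _ ≤ (2*π)⁻¹ * ((∫ t in I2pi, ψ t) + 2*π*V) := this
    _ = (2*π)⁻¹ * (∫ t in I2pi, ψ t) + V := by field_simp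

lemma agmon_h {G : ℝ × ℝ → ℝ} (hG : Smooth G) (x₂ : ℝ) :
    ∀ x₁ ∈ I2pi, G (x₁, x₂) ^ 2 ≤
      (2*π)⁻¹ * (∫ t in I2pi, G (t, x₂) ^ 2) + ∫ t in I2pi, |2 * G (t, x₂) * pd1 G (t, x₂)| := by
  apply avg_bound
  · exact ((hG.cont.comp (continuous_id.prodMk continuous_const)).pow 2).integrableOn_Ioc
  · intro x hx y hy
    apply ftc_diff (φ := fun t => G (t, x₂) ^ 2)
      (φ' := fun t => 2 * G (t, x₂) * pd1 G (t, x₂))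
      (fun t => by simpa using ((hasDerivAt_slice1 hG x₂ t).fun_pow 2))
      (by
        have h1 : Continuous fun t => G (t, x₂) := hG.cont.comp (continuous_id.prodMk continuous_const)
        have h2 : Continuous fun t => pd1 G (t, x₂) := hG.pd1.cont.comp (continuous_id.prodMk continuous_const)
        continuity) hx hy

lemma agmon_v {F : ℝ × ℝ → ℝ} (hF : Smooth F) :
    ∀ x₂ ∈ I2pi, (∫ t in I2pi, F (t, x₂) ^ 2) ≤
      (2*π)⁻¹ * (∫ z in Q2, F z ^ 2) + ∫ z in Q2, |2 * F z * pd2 F z| := by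
  have hcont2 : Continuous fun z : ℝ × ℝ => F z ^ 2 := hF.cont.pow 2
  have hcontD : Continuous fun z : ℝ × ℝ => |2 * F z * pd2 F z| :=
    ((continuous_const.mul hF.cont).mul hF.pd2.cont).abs
  have hiterD := integral_Q2_eq_iterated hcontD
  have hintD : Integrable (fun t : ℝ => ∫ s in I2pi, |2 * F (t, s) * pd2 F (t, s)|)
      ((volume : Measure ℝ).restrict I2pi) := by
    have := (integrableOn_Q2' hcontD).integral_prod_left
    exact this
  have key : ∀ x ∈ I2pi, ∀ y ∈ I2pi,
      (∫ t in I2pi, F (t, x) ^ 2) - (∫ t in I2pi, F (t, y) ^ 2)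
        ≤ ∫ z in Q2, |2 * F z * pd2 F z| := by
    intro x hx y hy
    have hix : IntegrableOn (fun t => F (t, x) ^ 2) I2pi :=
      ((hF.cont.comp (continuous_id.prodMk continuous_const)).pow 2).integrableOn_Ioc
    have hiy : IntegrableOn (fun t => F (t, y) ^ 2) I2pi :=
      ((hF.cont.comp (continuous_id.prodMk continuous_const)).pow 2).integrableOn_Ioc
    rw [← integral_sub hix hiy]
    have hpt : ∀ t : ℝ, F (t, x) ^ 2 - F (t, y) ^ 2
        ≤ ∫ s in I2pi, |2 * F (t, s) * pd2 F (t, s)| := by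
      intro t
      apply ftc_diff (φ := fun s => F (t, s) ^ 2)
        (φ' := fun s => 2 * F (t, s) * pd2 F (t, s))
        (fun s => by simpa using ((hasDerivAt_slice2 hF t s).fun_pow 2))
        (by
          have h1 : Continuous fun s => F (t, s) := hF.cont.comp (continuous_const.prodMk continuous_id)
          have h2 : Continuous fun s => pd2 F (t, s) := hF.pd2.cont.comp (continuous_const.prodMk continuous_id)
          continuity) hx hy
    calc (∫ t in I2pi, (F (t, x) ^ 2 - F (t, y) ^ 2))
        ≤ ∫ t in I2pi, ∫ s in I2pi, |2 * F (t, s) * pd2 F (t, s)| := by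
          apply setIntegral_mono_on (hix.sub hiy) hintD measurableSet_Ioc
          intro t _
          exact hpt t
      _ = ∫ z in Q2, |2 * F z * pd2 F z| := hiterD.symm
  have hψ : IntegrableOn (fun x₂ : ℝ => ∫ t in I2pi, F (t, x₂) ^ 2) I2pi := by
    have := (integrableOn_Q2' hcont2).integral_prod_right
    exact this
  intro x₂ hx₂
  have := avg_bound (∫ z in Q2, |2 * F z * pd2 F z|) hψ key x₂ hx₂
  rwa [← integral_Q2_eq_iterated' hcont2] at this

lemma sqrt_mul_sqrt_le_add {x y : ℝ} (hx : 0 ≤ x) (hy : 0 ≤ y) :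
    Real.sqrt x * Real.sqrt y ≤ (x + y) / 2 := by
  nlinarith [sq_nonneg (Real.sqrt x - Real.sqrt y), Real.sq_sqrt hx, Real.sq_sqrt hy,
    Real.sqrt_nonneg x, Real.sqrt_nonneg y]

lemma tri {F G H : ℝ × ℝ → ℝ} (hF : Smooth F) (hG : Smooth G) (hH : Smooth H) :
    |∫ z in Q2, F z * G z * H z| ≤
      Real.sqrt ((2*π)⁻¹ * (∫ z in Q2, F z ^ 2) + ∫ z in Q2, |2 * F z * pd2 F z|) *
      Real.sqrt ((2*π)⁻¹ * (∫ z in Q2, G z ^ 2) + ∫ z in Q2, |2 * G z * pd1 G z|) *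
      Real.sqrt (∫ z in Q2, H z ^ 2) := by
  classical
  set sF : ℝ → ℝ := fun x₂ => ∫ t in I2pi, F (t, x₂) ^ 2 with hsF
  set sH : ℝ → ℝ := fun x₂ => ∫ t in I2pi, H (t, x₂) ^ 2 with hsH
  set kG : ℝ → ℝ := fun x₂ => (2*π)⁻¹ * (∫ t in I2pi, G (t, x₂) ^ 2)
      + ∫ t in I2pi, |2 * G (t, x₂) * pd1 G (t, x₂)| with hkG
  set KF : ℝ := (2*π)⁻¹ * (∫ z in Q2, F z ^ 2) + ∫ z in Q2, |2 * F z * pd2 F z| with hKF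
  have hcF2 : Continuous fun z : ℝ × ℝ => F z ^ 2 := hF.cont.pow 2
  have hcG2 : Continuous fun z : ℝ × ℝ => G z ^ 2 := hG.cont.pow 2
  have hcH2 : Continuous fun z : ℝ × ℝ => H z ^ 2 := hH.cont.pow 2
  have hcGd : Continuous fun z : ℝ × ℝ => |2 * G z * pd1 G z| :=
    ((continuous_const.mul hG.cont).mul hG.pd1.cont).abs
  have hcFGH : Continuous fun z : ℝ × ℝ => |F z * G z * H z| :=
    ((hF.cont.mul hG.cont).mul hH.cont).abs
  have hsF0 : ∀ x₂, 0 ≤ sF x₂ := fun x₂ => integral_nonneg fun t => sq_nonneg _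
  have hsH0 : ∀ x₂, 0 ≤ sH x₂ := fun x₂ => integral_nonneg fun t => sq_nonneg _
  have hkG0 : ∀ x₂, 0 ≤ kG x₂ := by
    intro x₂
    have h1 : (0:ℝ) ≤ ∫ t in I2pi, G (t, x₂) ^ 2 := integral_nonneg fun t => sq_nonneg _
    have h2 : (0:ℝ) ≤ ∫ t in I2pi, |2 * G (t, x₂) * pd1 G (t, x₂)| :=
      integral_nonneg fun t => abs_nonneg _
    have h3 : (0:ℝ) ≤ (2*π)⁻¹ := le_of_lt (inv_pos.2 two_pi_pos)
    positivity
  have hisF : Integrable sF ((volume : Measure ℝ).restrict I2pi) :=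
    (integrableOn_Q2' hcF2).integral_prod_right
  have hisH : Integrable sH ((volume : Measure ℝ).restrict I2pi) :=
    (integrableOn_Q2' hcH2).integral_prod_right
  have hikG : Integrable kG ((volume : Measure ℝ).restrict I2pi) := by
    apply Integrable.add
    · exact ((integrableOn_Q2' hcG2).integral_prod_right).const_mul _
    · exact (integrableOn_Q2' hcGd).integral_prod_right
  have step2 : ∀ x₂ ∈ I2pi, (∫ t in I2pi, |F (t, x₂) * G (t, x₂) * H (t, x₂)|)
      ≤ Real.sqrt (kG x₂) * (Real.sqrt (sF x₂) * Real.sqrt (sH x₂)) := by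
    intro x₂ hx₂
    have hFc : Continuous fun t => F (t, x₂) := hF.cont.comp (continuous_id.prodMk continuous_const)
    have hGc : Continuous fun t => G (t, x₂) := hG.cont.comp (continuous_id.prodMk continuous_const)
    have hHc : Continuous fun t => H (t, x₂) := hH.cont.comp (continuous_id.prodMk continuous_const)
    have hGb : ∀ x₁ ∈ I2pi, |G (x₁, x₂)| ≤ Real.sqrt (kG x₂) := by
      intro x₁ hx₁
      exact Real.abs_le_sqrt (agmon_h hG x₂ x₁ hx₁)
    have h1 : (∫ t in I2pi, |F (t, x₂) * G (t, x₂) * H (t, x₂)|)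
        ≤ ∫ t in I2pi, Real.sqrt (kG x₂) * |F (t, x₂) * H (t, x₂)| := by
      apply setIntegral_mono_on
      · exact (hcFGH.comp (continuous_id.prodMk continuous_const)).integrableOn_Ioc
      · exact (continuous_const.mul ((hFc.mul hHc).abs)).integrableOn_Ioc
      · exact measurableSet_Ioc
      · intro t ht
        calc |F (t, x₂) * G (t, x₂) * H (t, x₂)| = |G (t, x₂)| * |F (t, x₂) * H (t, x₂)| := by
              rw [← abs_mul]; ring_nf
          _ ≤ Real.sqrt (kG x₂) * |F (t, x₂) * H (t, x₂)| :=
              mul_le_mul_of_nonneg_right (hGb t ht) (abs_nonneg _)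
    have h2 : (∫ t in I2pi, Real.sqrt (kG x₂) * |F (t, x₂) * H (t, x₂)|)
        = Real.sqrt (kG x₂) * ∫ t in I2pi, |F (t, x₂)| * |H (t, x₂)| := by
      rw [integral_const_mul]
      congr 1
      apply integral_congr_ae
      filter_upwards with t
      rw [abs_mul]
    have h3 : (∫ t in I2pi, |F (t, x₂)| * |H (t, x₂)|)
        ≤ Real.sqrt (sF x₂) * Real.sqrt (sH x₂) := by
      have := integral_cs ((volume : Measure ℝ).restrict I2pi)
        (fun t => |F (t, x₂)|) (fun t => |H (t, x₂)|)
        (by simpa [sq_abs, I2pi] using (hFc.fun_pow 2).integrableOn_Ioc (a := 0) (b := 2*π) |>.integrable)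
        (by simpa [sq_abs, I2pi] using (hHc.fun_pow 2).integrableOn_Ioc (a := 0) (b := 2*π) |>.integrable)
        (((hFc.abs).mul (hHc.abs)).integrableOn_Ioc)
      simpa [sq_abs] using this
    calc (∫ t in I2pi, |F (t, x₂) * G (t, x₂) * H (t, x₂)|)
        ≤ Real.sqrt (kG x₂) * ∫ t in I2pi, |F (t, x₂)| * |H (t, x₂)| := by rw [← h2]; exact h1
      _ ≤ Real.sqrt (kG x₂) * (Real.sqrt (sF x₂) * Real.sqrt (sH x₂)) :=
          mul_le_mul_of_nonneg_left h3 (Real.sqrt_nonneg _)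
  have hsFK : ∀ x₂ ∈ I2pi, Real.sqrt (sF x₂) ≤ Real.sqrt KF := by
    intro x₂ hx₂
    exact Real.sqrt_le_sqrt (agmon_v hF x₂ hx₂)
  have hintprod : Integrable (fun x₂ => Real.sqrt (kG x₂) * Real.sqrt (sH x₂))
      ((volume : Measure ℝ).restrict I2pi) := by
    apply Integrable.mono' ((hikG.add hisH).div_const 2)
    · exact (Real.continuous_sqrt.comp_aestronglyMeasurable hikG.1).mul
        (Real.continuous_sqrt.comp_aestronglyMeasurable hisH.1)
    · filter_upwards with x₂
      rw [Real.norm_eq_abs, _root_.abs_of_nonneg (mul_nonneg (Real.sqrt_nonneg _) (Real.sqrt_nonneg _))]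
      have := sqrt_mul_sqrt_le_add (hkG0 x₂) (hsH0 x₂)
      simpa using this
  have main : (∫ z in Q2, |F z * G z * H z|)
      ≤ Real.sqrt KF * ∫ x₂ in I2pi, Real.sqrt (kG x₂) * Real.sqrt (sH x₂) := by
    rw [integral_Q2_eq_iterated' hcFGH]
    calc (∫ x₂ in I2pi, ∫ x₁ in I2pi, |F (x₁, x₂) * G (x₁, x₂) * H (x₁, x₂)|)
        ≤ ∫ x₂ in I2pi, Real.sqrt KF * (Real.sqrt (kG x₂) * Real.sqrt (sH x₂)) := by
          apply setIntegral_mono_on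
          · exact (integrableOn_Q2' hcFGH).integral_prod_right
          · exact hintprod.const_mul _
          · exact measurableSet_Ioc
          · intro x₂ hx₂
            calc (∫ x₁ in I2pi, |F (x₁, x₂) * G (x₁, x₂) * H (x₁, x₂)|)
                ≤ Real.sqrt (kG x₂) * (Real.sqrt (sF x₂) * Real.sqrt (sH x₂)) := step2 x₂ hx₂
              _ ≤ Real.sqrt KF * (Real.sqrt (kG x₂) * Real.sqrt (sH x₂)) := by
                  have h := mul_le_mul_of_nonneg_right (hsFK x₂ hx₂)
                    (mul_nonneg (Real.sqrt_nonneg (kG x₂)) (Real.sqrt_nonneg (sH x₂)))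
                  calc Real.sqrt (kG x₂) * (Real.sqrt (sF x₂) * Real.sqrt (sH x₂))
                      = Real.sqrt (sF x₂) * (Real.sqrt (kG x₂) * Real.sqrt (sH x₂)) := by ring
                    _ ≤ Real.sqrt KF * (Real.sqrt (kG x₂) * Real.sqrt (sH x₂)) := h
      _ = Real.sqrt KF * ∫ x₂ in I2pi, Real.sqrt (kG x₂) * Real.sqrt (sH x₂) := integral_const_mul _ _
  have step4 : (∫ x₂ in I2pi, Real.sqrt (kG x₂) * Real.sqrt (sH x₂))
      ≤ Real.sqrt ((2*π)⁻¹ * (∫ z in Q2, G z ^ 2) + ∫ z in Q2, |2 * G z * pd1 G z|) *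
        Real.sqrt (∫ z in Q2, H z ^ 2) := by
    have hcs := integral_cs ((volume : Measure ℝ).restrict I2pi)
      (fun x₂ => Real.sqrt (kG x₂)) (fun x₂ => Real.sqrt (sH x₂))
      (by
        have h : (fun x₂ => Real.sqrt (kG x₂) ^ 2) =ᵐ[(volume : Measure ℝ).restrict I2pi] kG := by
          filter_upwards with x₂; rw [Real.sq_sqrt (hkG0 x₂)]
        exact hikG.congr h.symm)
      (by
        have h : (fun x₂ => Real.sqrt (sH x₂) ^ 2) =ᵐ[(volume : Measure ℝ).restrict I2pi] sH := by
          filter_upwards with x₂; rw [Real.sq_sqrt (hsH0 x₂)]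
        exact hisH.congr h.symm)
      hintprod
    have e1 : (∫ x₂ in I2pi, Real.sqrt (kG x₂) ^ 2) = (2*π)⁻¹ * (∫ z in Q2, G z ^ 2)
        + ∫ z in Q2, |2 * G z * pd1 G z| := by
      have h : (∫ x₂ in I2pi, Real.sqrt (kG x₂) ^ 2) = ∫ x₂ in I2pi, kG x₂ := by
        apply integral_congr_ae
        filter_upwards with x₂; rw [Real.sq_sqrt (hkG0 x₂)]
      have i1 : Integrable (fun x₂ : ℝ => (2*π)⁻¹ * ∫ t in I2pi, G (t, x₂) ^ 2)
          ((volume : Measure ℝ).restrict I2pi) := by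
        have := ((integrableOn_Q2' hcG2).integral_prod_right).const_mul ((2*π)⁻¹)
        exact this
      have i2 : Integrable (fun x₂ : ℝ => ∫ t in I2pi, |2 * G (t, x₂) * pd1 G (t, x₂)|)
          ((volume : Measure ℝ).restrict I2pi) := by
        have := (integrableOn_Q2' hcGd).integral_prod_right
        exact this
      rw [h, hkG]
      rw [integral_add i1 i2, integral_const_mul]
      rw [← integral_Q2_eq_iterated' hcG2, ← integral_Q2_eq_iterated' hcGd]
    have e2 : (∫ x₂ in I2pi, Real.sqrt (sH x₂) ^ 2) = ∫ z in Q2, H z ^ 2 := by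
      have h : (∫ x₂ in I2pi, Real.sqrt (sH x₂) ^ 2) = ∫ x₂ in I2pi, sH x₂ := by
        apply integral_congr_ae
        filter_upwards with x₂; rw [Real.sq_sqrt (hsH0 x₂)]
      rw [h, hsH, ← integral_Q2_eq_iterated' hcH2]
    rw [e1, e2] at hcs
    exact hcs
  calc |∫ z in Q2, F z * G z * H z| ≤ ∫ z in Q2, |F z * G z * H z| := by
        simpa [Real.norm_eq_abs, abs_mul] using
          norm_integral_le_integral_norm (μ := (volume : Measure (ℝ×ℝ)).restrict Q2)
            (fun z => F z * G z * H z)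
    _ ≤ Real.sqrt KF * ∫ x₂ in I2pi, Real.sqrt (kG x₂) * Real.sqrt (sH x₂) := main
    _ ≤ Real.sqrt KF * (Real.sqrt ((2*π)⁻¹ * (∫ z in Q2, G z ^ 2) + ∫ z in Q2, |2 * G z * pd1 G z|) *
        Real.sqrt (∫ z in Q2, H z ^ 2)) := mul_le_mul_of_nonneg_left step4 (Real.sqrt_nonneg _)
    _ = _ := by rw [hKF]; ring

lemma fderiv_translate {f : ℝ × ℝ → ℝ} (hf : Smooth f) (e : ℝ × ℝ)
    (hper : ∀ y, f (y + e) = f y) (x : ℝ × ℝ) : fderiv ℝ f (x + e) = fderiv ℝ f x := by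
  have h1 : HasFDerivAt (fun y => f (y + e)) (fderiv ℝ f (x + e)) x := by
    have := ((hf.differentiable (by simp) (x + e)).hasFDerivAt).comp x
      ((hasFDerivAt_id x).add_const e)
    simpa [Function.comp_def] using this
  have h2 : (fun y => f (y + e)) = f := funext hper
  rw [h2] at h1
  exact h1.fderiv.symm

lemma Per.deriv2 {f : ℝ × ℝ → ℝ} (hf : Smooth f) (hp : Per f) : Per (pd2 f) := by
  have key : ∀ e : ℝ × ℝ, (∀ y, f (y + e) = f y) → ∀ x : ℝ × ℝ, pd2 f (x + e) = pd2 f x :=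
    fun e he x => by
      show fderiv ℝ f (x + e) (0, 1) = fderiv ℝ f x (0, 1)
      rw [fderiv_translate hf e he x]
  constructor
  · intro x
    have he : ∀ y : ℝ × ℝ, f (y + ((2*π:ℝ), (0:ℝ))) = f y := fun y => by
      have hy : y + ((2*π:ℝ), (0:ℝ)) = (y.1 + 2*π, y.2) := by ext <;> simp
      rw [hy]; exact hp.1 y
    have h := key ((2*π:ℝ), (0:ℝ)) he x
    have hx : x + ((2*π:ℝ), (0:ℝ)) = (x.1 + 2*π, x.2) := by ext <;> simp
    rw [hx] at h; exact h
  · intro x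
    have he : ∀ y : ℝ × ℝ, f (y + ((0:ℝ), (2*π:ℝ))) = f y := fun y => by
      have hy : y + ((0:ℝ), (2*π:ℝ)) = (y.1, y.2 + 2*π) := by ext <;> simp
      rw [hy]; exact hp.2 y
    have h := key ((0:ℝ), (2*π:ℝ)) he x
    have hx : x + ((0:ℝ), (2*π:ℝ)) = (x.1, x.2 + 2*π) := by ext <;> simp
    rw [hx] at h; exact h

lemma Per.mul {f g : ℝ × ℝ → ℝ} (hf : Per f) (hg : Per g) : Per fun x => f x * g x :=
  ⟨fun x => by simp only []; rw [hf.1 x, hg.1 x], fun x => by simp only []; rw [hf.2 x, hg.2 x]⟩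

lemma Per.add {f g : ℝ × ℝ → ℝ} (hf : Per f) (hg : Per g) : Per fun x => f x + g x :=
  ⟨fun x => by simp only []; rw [hf.1 x, hg.1 x], fun x => by simp only []; rw [hf.2 x, hg.2 x]⟩

-- Cauchy-Schwarz corollary for the |2 F dF| terms

lemma abs_term_bound {F D : ℝ × ℝ → ℝ} (hF : Continuous F) (hD : Continuous D) :
    (∫ z in Q2, |2 * F z * D z|) ≤
      2 * Real.sqrt (∫ z in Q2, F z ^ 2) * Real.sqrt (∫ z in Q2, D z ^ 2) := by
  have h1 : (∫ z in Q2, |2 * F z * D z|) = ∫ z in Q2, (2 * |F z|) * |D z| := by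
    apply integral_congr_ae
    filter_upwards with z
    rw [abs_mul, abs_mul]
    simp [abs_of_nonneg, mul_assoc]
  rw [h1]
  have h2 : (∫ z in Q2, (2 * |F z|) * |D z|) = 2 * ∫ z in Q2, |F z| * |D z| := by
    rw [← integral_const_mul]
    apply integral_congr_ae
    filter_upwards with z
    ring
  rw [h2, mul_assoc]
  apply mul_le_mul_of_nonneg_left _ (by norm_num : (0:ℝ) ≤ 2)
  have := integral_cs ((volume : Measure (ℝ×ℝ)).restrict Q2) (fun z => |F z|) (fun z => |D z|)
    (by simpa [sq_abs] using (integrableOn_Q2 (hF.fun_pow 2)).integrable)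
    (by simpa [sq_abs] using (integrableOn_Q2 (hD.fun_pow 2)).integrable)
    (integrableOn_Q2 (hF.abs.mul hD.abs))
  simpa [sq_abs] using this

-- more pointwise calculus

lemma pd1_add {f g : ℝ × ℝ → ℝ} (hf : Smooth f) (hg : Smooth g) (x : ℝ × ℝ) :
    pd1 (fun y => f y + g y) x = pd1 f x + pd1 g x := by
  have hfd : DifferentiableAt ℝ f x := hf.differentiable (by simp) |>.differentiableAt
  have hgd : DifferentiableAt ℝ g x := hg.differentiable (by simp) |>.differentiableAt
  simp [pd1, fderiv_fun_add hfd hgd]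

lemma pd2_add {f g : ℝ × ℝ → ℝ} (hf : Smooth f) (hg : Smooth g) (x : ℝ × ℝ) :
    pd2 (fun y => f y + g y) x = pd2 f x + pd2 g x := by
  have hfd : DifferentiableAt ℝ f x := hf.differentiable (by simp) |>.differentiableAt
  have hgd : DifferentiableAt ℝ g x := hg.differentiable (by simp) |>.differentiableAt
  simp [pd2, fderiv_fun_add hfd hgd]

lemma Smooth.mul {f g : ℝ × ℝ → ℝ} (hf : Smooth f) (hg : Smooth g) :
    Smooth fun x => f x * g x := ContDiff.mul hf hg

lemma Smooth.add' {f g : ℝ × ℝ → ℝ} (hf : Smooth f) (hg : Smooth g) :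
    Smooth fun x => f x + g x := hf.add hg

-- the key identity

lemma key_identity {u : ℝ × ℝ → ℝ × ℝ} (hu : SmoothV u) (hp : PerV u) (hdf : DivFree u) :
    ipV (pd2V u) (pd2V (advect u u)) =
      (∫ z in Q2, pd1 (comp2 u) z * pd2 (comp2 u) z * pd2 (comp1 u) z)
      + ∫ z in Q2, pd2 (comp2 u) z * pd2 (comp2 u) z * pd2 (comp2 u) z := by
  set A : ℝ × ℝ → ℝ := comp1 u with hA
  set B : ℝ × ℝ → ℝ := comp2 u with hB
  have hAs : Smooth A := (contDiff_fst.comp hu : ContDiff ℝ (⊤ : ℕ∞) fun x => (u x).1)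
  have hBs : Smooth B := (contDiff_snd.comp hu : ContDiff ℝ (⊤ : ℕ∞) fun x => (u x).2)
  set g : ℝ × ℝ → ℝ := pd2 A with hg
  set d : ℝ × ℝ → ℝ := pd2 B with hd
  set p : ℝ × ℝ → ℝ := pd1 A with hp'
  set q : ℝ × ℝ → ℝ := pd1 B with hq
  have hgs : Smooth g := hAs.pd2
  have hds : Smooth d := hBs.pd2
  have hps : Smooth p := hAs.pd1
  have hqs : Smooth q := hBs.pd1
  -- w = g^2 + d^2
  set w : ℝ × ℝ → ℝ := fun x => g x * g x + d x * d x with hw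
  have hws : Smooth w := (hgs.mul hgs).add' (hds.mul hds)
  have hAws : Smooth fun x => A x * w x := hAs.mul hws
  have hBws : Smooth fun x => B x * w x := hBs.mul hws
  -- periodicity of A*w, B*w
  have hPerg : Per g := Per.deriv2 hAs hp.1
  have hPerd : Per d := Per.deriv2 hBs hp.2
  have hPerw : Per w := (hPerg.mul hPerg).add (hPerd.mul hPerd)
  have hPerAw : Per fun x => A x * w x := hp.1.mul hPerw
  have hPerBw : Per fun x => B x * w x := hp.2.mul hPerw
  -- the advect components
  have hA1 : comp1 (advect u u) = fun x => A x * p x + B x * g x := rfl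
  have hA2 : comp2 (advect u u) = fun x => A x * q x + B x * d x := rfl
  have hA1s : Smooth (comp1 (advect u u)) := by rw [hA1]; exact (hAs.mul hps).add' (hBs.mul hgs)
  have hA2s : Smooth (comp2 (advect u u)) := by rw [hA2]; exact (hAs.mul hqs).add' (hBs.mul hds)
  -- pointwise identity
  have hpt : ∀ x : ℝ × ℝ,
      g x * pd2 (comp1 (advect u u)) x + d x * pd2 (comp2 (advect u u)) x
      = q x * d x * g x + d x * d x * d x
        + (1/2) * (pd1 (fun y => A y * w y) x + pd2 (fun y => B y * w y) x) := by
    intro x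
    have e1 : pd2 (comp1 (advect u u)) x
        = (g x * p x + A x * pd2 p x) + (d x * g x + B x * pd2 g x) := by
      rw [hA1, pd2_add (hAs.mul hps) (hBs.mul hgs), pd2_mul hAs hps, pd2_mul hBs hgs]
    have e2 : pd2 (comp2 (advect u u)) x
        = (g x * q x + A x * pd2 q x) + (d x * d x + B x * pd2 d x) := by
      rw [hA2, pd2_add (hAs.mul hqs) (hBs.mul hds), pd2_mul hAs hqs, pd2_mul hBs hds]
    have e3 : pd1 (fun y => A y * w y) x = p x * w x + A x * pd1 w x := by
      rw [pd1_mul hAs hws]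
    have e4 : pd2 (fun y => B y * w y) x = d x * w x + B x * pd2 w x := by
      rw [pd2_mul hBs hws]
    have e5 : pd1 w x = 2 * g x * pd1 g x + 2 * d x * pd1 d x := by
      rw [hw]
      rw [pd1_add (hgs.mul hgs) (hds.mul hds), pd1_mul hgs hgs, pd1_mul hds hds]
      ring
    have e6 : pd2 w x = 2 * g x * pd2 g x + 2 * d x * pd2 d x := by
      rw [hw]
      rw [pd2_add (hgs.mul hgs) (hds.mul hds), pd2_mul hgs hgs, pd2_mul hds hds]
      ring
    have sym1 : pd2 p x = pd1 g x := by
      rw [hp', hg]; exact (pd1_pd2 hAs x).symm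
    have sym2 : pd2 q x = pd1 d x := by
      rw [hq, hd]; exact (pd1_pd2 hBs x).symm
    have hdiv : p x + d x = 0 := hdf x
    rw [e1, e2, e3, e4, e5, e6, sym1, sym2, hw]
    have hpx : p x = - d x := by linarith
    rw [hpx]
    ring
  -- integral identity
  have hint : ipV (pd2V u) (pd2V (advect u u))
      = ∫ x in Q2, (q x * d x * g x + d x * d x * d x
        + (1/2) * (pd1 (fun y => A y * w y) x + pd2 (fun y => B y * w y) x)) := by
    apply integral_congr_ae
    filter_upwards with x
    exact hpt x
  have hi1 : IntegrableOn (fun x => q x * d x * g x) Q2 :=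
    integrableOn_Q2 ((hqs.cont.mul hds.cont).mul hgs.cont)
  have hi2 : IntegrableOn (fun x => d x * d x * d x) Q2 :=
    integrableOn_Q2 ((hds.cont.mul hds.cont).mul hds.cont)
  have hi3 : IntegrableOn (fun x => pd1 (fun y => A y * w y) x) Q2 :=
    integrableOn_Q2 hAws.pd1.cont
  have hi4 : IntegrableOn (fun x => pd2 (fun y => B y * w y) x) Q2 :=
    integrableOn_Q2 hBws.pd2.cont
  have h12 : IntegrableOn (fun x => q x * d x * g x + d x * d x * d x) Q2 := hi1.add hi2
  have h34 : IntegrableOn (fun x => (1/2 : ℝ) * (pd1 (fun y => A y * w y) x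
      + pd2 (fun y => B y * w y) x)) Q2 := (hi3.add hi4).const_mul _
  rw [hint]
  rw [integral_add h12 h34, integral_add hi1 hi2, integral_const_mul, integral_add hi3 hi4]
  rw [integral_pd1_eq_zero hAws hPerAw, integral_pd2_eq_zero hBws hPerBw]
  ring

set_option maxHeartbeats 1000000 in

lemma young_main {a P Q M D : ℝ} (ha : 0 < a) (hP : 0 ≤ P) (hQ : 0 ≤ Q) (hM : 0 ≤ M)
    (hD0 : 0 ≤ D) (hDP : D ≤ P) (hDQ : D ≤ Q) :
    (P + Real.sqrt (2*P*M)) * (D + Real.sqrt (2*D*M)) * Q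
      + (D + Real.sqrt (2*D*M)) * (D + Real.sqrt (2*D*M)) * D
      ≤ a * M^2 + (6 + 16/a) * (1+P^2) * Q^2 := by
  set rP := Real.sqrt (2*P*M) with hrP
  set rD := Real.sqrt (2*D*M) with hrD
  set rQ := Real.sqrt (2*Q*M) with hrQ
  have hrP0 : 0 ≤ rP := Real.sqrt_nonneg _
  have hrD0 : 0 ≤ rD := Real.sqrt_nonneg _
  have hrQ0 : 0 ≤ rQ := Real.sqrt_nonneg _
  have hrD2 : rD^2 = 2*D*M := Real.sq_sqrt (by positivity)
  have hrDQ : rD ≤ rQ := Real.sqrt_le_sqrt (by nlinarith)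
  have hrQb : rQ ≤ Q + M := by
    have h1 : rQ ≤ Real.sqrt ((Q+M)^2) := Real.sqrt_le_sqrt (by nlinarith)
    rwa [Real.sqrt_sq (by positivity)] at h1
  have hPD : rP * rD ≤ 2*P*M := by
    have h1 : rP * rD = Real.sqrt ((2*P*M)*(2*D*M)) := (Real.sqrt_mul (by positivity) _).symm
    have h2 : Real.sqrt ((2*P*M)*(2*D*M)) ≤ Real.sqrt ((2*P*M)^2) :=
      Real.sqrt_le_sqrt (by nlinarith [mul_nonneg (mul_nonneg hP (sq_nonneg M)) (sub_nonneg.2 hDP)])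
    rw [Real.sqrt_sq (by positivity)] at h2
    linarith [h1 ▸ h2]
  have hPDrQ : rP * D ≤ P * rQ := by
    have e1 : rP * D = Real.sqrt (2*P*M * D^2) := by
      rw [Real.sqrt_mul (by positivity) (D^2), Real.sqrt_sq hD0]
    have e2 : P * rQ = Real.sqrt (P^2 * (2*Q*M)) := by
      rw [Real.sqrt_mul (sq_nonneg P), Real.sqrt_sq hP]
    rw [e1, e2]
    have hD2 : D^2 ≤ P*Q := by nlinarith [mul_le_mul hDP hDQ hD0 hP]
    exact Real.sqrt_le_sqrt (by nlinarith [mul_nonneg (mul_nonneg hP hM) (sub_nonneg.2 hD2)])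
  have hD2 : D^2 ≤ P*Q := by nlinarith [mul_le_mul hDP hDQ hD0 hP]
  have hrDb : rD ≤ Q + M := le_trans hrDQ hrQb
  -- individual bounds
  have b1 : P*D*Q ≤ P*Q*Q := by
    nlinarith [mul_nonneg (mul_nonneg hP hQ) (sub_nonneg.2 hDQ)]
  have b2 : P*rD*Q ≤ P*(Q+M)*Q := by
    nlinarith [mul_nonneg (mul_nonneg hP hQ) (sub_nonneg.2 hrDb)]
  have b3 : rP*D*Q ≤ P*(Q+M)*Q := by
    have h := le_trans hPDrQ (mul_le_mul_of_nonneg_left hrQb hP)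
    nlinarith [mul_le_mul_of_nonneg_right h hQ]
  have b4 : rP*rD*Q ≤ 2*P*M*Q := mul_le_mul_of_nonneg_right hPD hQ
  have b5 : D^3 ≤ P*Q*Q := by
    nlinarith [mul_le_mul hD2 hDQ hD0 (mul_nonneg hP hQ)]
  have b6 : 2*D^2*rD ≤ 2*(P*Q)*(Q+M) := by
    nlinarith [mul_le_mul hD2 hrDb hrD0 (mul_nonneg hP hQ)]
  have b7 : rD^2*D ≤ 2*P*Q*M := by
    rw [hrD2]
    nlinarith [mul_nonneg hM (sub_nonneg.2 hD2)]
  have expand : (P + rP) * (D + rD) * Q + (D + rD) * (D + rD) * D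
      = P*D*Q + P*rD*Q + rP*D*Q + rP*rD*Q + (D^3 + 2*D^2*rD + rD^2*D) := by ring
  have sum_bound : (P + rP) * (D + rD) * Q + (D + rD) * (D + rD) * D
      ≤ 6*(P*Q*Q) + 8*(P*Q*M) := by
    rw [expand]
    nlinarith [b1, b2, b3, b4, b5, b6, b7]
  have hP1 : P ≤ 1 + P^2 := by nlinarith [sq_nonneg (P-1)]
  have h6 : 6*(P*Q*Q) ≤ 6*(1+P^2)*Q^2 := by
    nlinarith [mul_nonneg (sq_nonneg Q) (sub_nonneg.2 hP1)]
  have h8 : 8*(P*Q*M) ≤ a*M^2 + 16/a*(P^2*Q^2) := by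
    have key : a*(8*(P*Q*M)) ≤ a*(a*M^2 + 16/a*(P^2*Q^2)) := by
      have e : a*(a*M^2 + 16/a*(P^2*Q^2)) = a^2*M^2 + 16*(P^2*Q^2) := by
        field_simp
      rw [e]
      nlinarith [sq_nonneg (a*M - 4*(P*Q))]
    exact le_of_mul_le_mul_left key ha
  have h16 : (0:ℝ) ≤ 16/a := by positivity
  have hfin : 16/a*(P^2*Q^2) ≤ 16/a*(1+P^2)*Q^2 := by
    nlinarith [mul_nonneg h16 (sq_nonneg Q)]
  calc (P + rP) * (D + rD) * Q + (D + rD) * (D + rD) * D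
      ≤ 6*(P*Q*Q) + 8*(P*Q*M) := sum_bound
    _ ≤ 6*(1+P^2)*Q^2 + (a*M^2 + 16/a*(P^2*Q^2)) := by linarith
    _ ≤ a*M^2 + (6 + 16/a)*(1+P^2)*Q^2 := by nlinarith [hfin]

lemma sqrt_sq_add_le {x y : ℝ} (hx : 0 ≤ x) (hy : 0 ≤ y) :
    Real.sqrt (x^2 + y) ≤ x + Real.sqrt y := by
  have h1 : x^2 + y ≤ (x + Real.sqrt y)^2 := by
    nlinarith [Real.sq_sqrt hy, Real.sqrt_nonneg y, mul_nonneg hx (Real.sqrt_nonneg y)]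
  calc Real.sqrt (x^2 + y) ≤ Real.sqrt ((x + Real.sqrt y)^2) := Real.sqrt_le_sqrt h1
    _ = x + Real.sqrt y := Real.sqrt_sq (by positivity)

lemma mul3_le {x y z x' y' z' : ℝ} (hx0 : 0 ≤ x) (hy0 : 0 ≤ y) (hz0 : 0 ≤ z)
    (hx : x ≤ x') (hy : y ≤ y') (hz : z ≤ z') : x*y*z ≤ x'*y'*z' := by
  have hx'0 : 0 ≤ x' := le_trans hx0 hx
  have hy'0 : 0 ≤ y' := le_trans hy0 hy
  exact mul_le_mul (mul_le_mul hx hy hy0 hx'0) hz hz0 (mul_nonneg hx'0 hy'0)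

lemma inv_two_pi_le_one : ((2*π)⁻¹ : ℝ) ≤ 1 := by
  rw [inv_le_one_iff₀]
  right
  nlinarith [Real.pi_gt_three]

lemma factor_bound {f D : ℝ × ℝ → ℝ} (hf : Smooth f) (hD : Smooth D) {X Y : ℝ}
    (hX : Real.sqrt (∫ z in Q2, f z ^ 2) ≤ X) (hY : Real.sqrt (∫ z in Q2, D z ^ 2) ≤ Y) :
    Real.sqrt ((2*π)⁻¹ * (∫ z in Q2, f z ^ 2) + ∫ z in Q2, |2 * f z * D z|)
      ≤ X + Real.sqrt (2*X*Y) := by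
  have hI0 : (0:ℝ) ≤ ∫ z in Q2, f z ^ 2 := integral_nonneg fun z => sq_nonneg _
  have hJ0 : (0:ℝ) ≤ ∫ z in Q2, D z ^ 2 := integral_nonneg fun z => sq_nonneg _
  have hX0 : 0 ≤ X := le_trans (Real.sqrt_nonneg _) hX
  have hY0 : 0 ≤ Y := le_trans (Real.sqrt_nonneg _) hY
  have h1 : (2*π)⁻¹ * (∫ z in Q2, f z ^ 2) ≤ X^2 := by
    have e : (∫ z in Q2, f z ^ 2) = Real.sqrt (∫ z in Q2, f z ^ 2) ^ 2 :=
      (Real.sq_sqrt hI0).symm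
    have h2 : (∫ z in Q2, f z ^ 2) ≤ X^2 := by
      rw [e]; exact pow_le_pow_left₀ (Real.sqrt_nonneg _) hX 2
    calc (2*π)⁻¹ * (∫ z in Q2, f z ^ 2) ≤ 1 * (∫ z in Q2, f z ^ 2) :=
          mul_le_mul_of_nonneg_right inv_two_pi_le_one hI0
      _ = ∫ z in Q2, f z ^ 2 := one_mul _
      _ ≤ X^2 := h2
  have h2 : (∫ z in Q2, |2 * f z * D z|) ≤ 2*X*Y := by
    calc (∫ z in Q2, |2 * f z * D z|)
        ≤ 2 * Real.sqrt (∫ z in Q2, f z ^ 2) * Real.sqrt (∫ z in Q2, D z ^ 2) :=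
          abs_term_bound hf.cont hD.cont
      _ ≤ 2*X*Y := by
          apply mul_le_mul (mul_le_mul_of_nonneg_left hX (by norm_num)) hY
            (Real.sqrt_nonneg _) (by positivity)
  calc Real.sqrt ((2*π)⁻¹ * (∫ z in Q2, f z ^ 2) + ∫ z in Q2, |2 * f z * D z|)
      ≤ Real.sqrt (X^2 + 2*X*Y) := by
        apply Real.sqrt_le_sqrt
        have hA0 : (0:ℝ) ≤ ∫ z in Q2, |2 * f z * D z| := integral_nonneg fun z => abs_nonneg _
        linarith
    _ ≤ X + Real.sqrt (2*X*Y) := sqrt_sq_add_le hX0 (by positivity)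

lemma pd2_neg {f : ℝ × ℝ → ℝ} (x : ℝ × ℝ) :
    pd2 (fun y => -(f y)) x = - pd2 f x := by
  simp [pd2, fderiv_neg]

/-- For every `a > 0` there is `C_a > 0` such that for every smooth
divergence-free `u : 𝕋² → ℝ²`,
`|⟨∂₂u, ∂₂(u·∇u)⟩_{L²}| ≤ a ‖∂₁∂₂u‖²_{L²} + C_a (1 + ‖∂₁u‖²_{L²}) ‖∂₂u‖²_{L²}`. -/
theorem pd2_advect_estimate (a : ℝ) (ha : 0 < a) :
    ∃ C > 0, ∀ u : ℝ × ℝ → ℝ × ℝ,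
      SmoothV u → PerV u → DivFree u →
      |ipV (pd2V u) (pd2V (advect u u))| ≤
        a * L2V (pd1V (pd2V u)) ^ 2 + C * (1 + L2V (pd1V u) ^ 2) * L2V (pd2V u) ^ 2 := by
  refine ⟨6 + 16/a, by positivity, ?_⟩
  intro u hu hper hdf
  -- abbreviations
  set A : ℝ × ℝ → ℝ := comp1 u with hA
  set B : ℝ × ℝ → ℝ := comp2 u with hB
  have hAs : Smooth A := (contDiff_fst.comp hu : ContDiff ℝ (⊤ : ℕ∞) fun x => (u x).1)
  have hBs : Smooth B := (contDiff_snd.comp hu : ContDiff ℝ (⊤ : ℕ∞) fun x => (u x).2)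
  set g : ℝ × ℝ → ℝ := pd2 A with hg
  set d : ℝ × ℝ → ℝ := pd2 B with hd
  set p : ℝ × ℝ → ℝ := pd1 A with hp'
  set q : ℝ × ℝ → ℝ := pd1 B with hq
  have hgs : Smooth g := hAs.pd2
  have hds : Smooth d := hBs.pd2
  have hps : Smooth p := hAs.pd1
  have hqs : Smooth q := hBs.pd1
  set P : ℝ := L2V (pd1V u) with hP
  set Q : ℝ := L2V (pd2V u) with hQ
  set M : ℝ := L2V (pd1V (pd2V u)) with hM
  have hP0 : 0 ≤ P := Real.sqrt_nonneg _
  have hQ0 : 0 ≤ Q := Real.sqrt_nonneg _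
  have hM0 : 0 ≤ M := Real.sqrt_nonneg _
  -- squared norms as integrals
  have hP2 : P^2 = ∫ x in Q2, (p x ^ 2 + q x ^ 2) := by
    have h0 : (0:ℝ) ≤ tintR fun x => (pd1V u x).1 ^ 2 + (pd1V u x).2 ^ 2 :=
      integral_nonneg fun x => by positivity
    exact Real.sq_sqrt h0
  have hQ2 : Q^2 = ∫ x in Q2, (g x ^ 2 + d x ^ 2) := by
    have h0 : (0:ℝ) ≤ tintR fun x => (pd2V u x).1 ^ 2 + (pd2V u x).2 ^ 2 :=
      integral_nonneg fun x => by positivity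
    exact Real.sq_sqrt h0
  have hM2 : M^2 = ∫ x in Q2, (pd1 g x ^ 2 + pd1 d x ^ 2) := by
    have h0 : (0:ℝ) ≤ tintR fun x => (pd1V (pd2V u) x).1 ^ 2 + (pd1V (pd2V u) x).2 ^ 2 :=
      integral_nonneg fun x => by positivity
    exact Real.sq_sqrt h0
  -- pointwise facts from divergence-free
  have hdp : ∀ x, d x = -(p x) := fun x => by have := hdf x; simp only [hd, hp', hA, hB]; linarith
  have hdfun : d = fun y => -(p y) := funext hdp
  -- component norm bounds
  have sqrt_le_of_int_le : ∀ {f : ℝ × ℝ → ℝ} {X : ℝ}, 0 ≤ X →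
      (∫ z in Q2, f z ^ 2) ≤ X^2 → Real.sqrt (∫ z in Q2, f z ^ 2) ≤ X := by
    intro f X hX0 h
    calc Real.sqrt (∫ z in Q2, f z ^ 2) ≤ Real.sqrt (X^2) := Real.sqrt_le_sqrt h
      _ = X := Real.sqrt_sq hX0
  have hnq : Real.sqrt (∫ z in Q2, q z ^ 2) ≤ P := by
    apply sqrt_le_of_int_le hP0
    rw [hP2]
    apply setIntegral_mono_on (integrableOn_Q2 (hqs.cont.pow 2))
      (integrableOn_Q2 ((hps.cont.pow 2).add (hqs.cont.pow 2))) measurableSet_Q2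
    intro x _; simp only [Pi.add_apply, Pi.pow_apply]; nlinarith [sq_nonneg (p x)]
  have hng : Real.sqrt (∫ z in Q2, g z ^ 2) ≤ Q := by
    apply sqrt_le_of_int_le hQ0
    rw [hQ2]
    apply setIntegral_mono_on (integrableOn_Q2 (hgs.cont.pow 2))
      (integrableOn_Q2 ((hgs.cont.pow 2).add (hds.cont.pow 2))) measurableSet_Q2
    intro x _; simp only [Pi.add_apply, Pi.pow_apply]; nlinarith [sq_nonneg (d x)]
  set D : ℝ := Real.sqrt (∫ z in Q2, d z ^ 2) with hD
  have hD0 : 0 ≤ D := Real.sqrt_nonneg _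
  have hndQ : D ≤ Q := by
    apply sqrt_le_of_int_le hQ0
    rw [hQ2]
    apply setIntegral_mono_on (integrableOn_Q2 (hds.cont.pow 2))
      (integrableOn_Q2 ((hgs.cont.pow 2).add (hds.cont.pow 2))) measurableSet_Q2
    intro x _; simp only [Pi.add_apply, Pi.pow_apply]; nlinarith [sq_nonneg (g x)]
  have hndP : D ≤ P := by
    apply sqrt_le_of_int_le hP0
    have he : (∫ z in Q2, d z ^ 2) = ∫ z in Q2, p z ^ 2 := by
      apply integral_congr_ae
      filter_upwards with z
      rw [hdp z]; ring
    rw [he, hP2]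
    apply setIntegral_mono_on (integrableOn_Q2 (hps.cont.pow 2))
      (integrableOn_Q2 ((hps.cont.pow 2).add (hqs.cont.pow 2))) measurableSet_Q2
    intro x _; simp only [Pi.add_apply, Pi.pow_apply]; nlinarith [sq_nonneg (q x)]
  -- second derivative bounds
  have hm1d : Real.sqrt (∫ z in Q2, pd1 d z ^ 2) ≤ M := by
    apply sqrt_le_of_int_le hM0
    rw [hM2]
    apply setIntegral_mono_on (integrableOn_Q2 (hds.pd1.cont.pow 2))
      (integrableOn_Q2 ((hgs.pd1.cont.pow 2).add (hds.pd1.cont.pow 2))) measurableSet_Q2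
    intro x _; simp only [Pi.add_apply, Pi.pow_apply]; nlinarith [sq_nonneg (pd1 g x)]
  have hm2q : Real.sqrt (∫ z in Q2, pd2 q z ^ 2) ≤ M := by
    apply sqrt_le_of_int_le hM0
    have he : (∫ z in Q2, pd2 q z ^ 2) = ∫ z in Q2, pd1 d z ^ 2 := by
      apply integral_congr_ae
      filter_upwards with z
      rw [hq, hd, ← pd1_pd2 hBs z]
    rw [he, hM2]
    apply setIntegral_mono_on (integrableOn_Q2 (hds.pd1.cont.pow 2))
      (integrableOn_Q2 ((hgs.pd1.cont.pow 2).add (hds.pd1.cont.pow 2))) measurableSet_Q2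
    intro x _; simp only [Pi.add_apply, Pi.pow_apply]; nlinarith [sq_nonneg (pd1 g x)]
  have hm2d : Real.sqrt (∫ z in Q2, pd2 d z ^ 2) ≤ M := by
    apply sqrt_le_of_int_le hM0
    have he : (∫ z in Q2, pd2 d z ^ 2) = ∫ z in Q2, pd1 g z ^ 2 := by
      apply integral_congr_ae
      filter_upwards with z
      have e1 : pd2 d z = -(pd2 p z) := by rw [hdfun]; exact pd2_neg z
      have e2 : pd2 p z = pd1 g z := by rw [hp', hg]; exact (pd1_pd2 hAs z).symm
      rw [e1, e2]; ring
    rw [he, hM2]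
    apply setIntegral_mono_on (integrableOn_Q2 (hgs.pd1.cont.pow 2))
      (integrableOn_Q2 ((hgs.pd1.cont.pow 2).add (hds.pd1.cont.pow 2))) measurableSet_Q2
    intro x _; simp only [Pi.add_apply, Pi.pow_apply]; nlinarith [sq_nonneg (pd1 d x)]
  -- trilinear bounds
  have tri1 := tri hqs hds hgs
  have tri2 := tri hds hds hds
  have fq : Real.sqrt ((2*π)⁻¹ * (∫ z in Q2, q z ^ 2) + ∫ z in Q2, |2 * q z * pd2 q z|)
      ≤ P + Real.sqrt (2*P*M) := factor_bound hqs hqs.pd2 hnq hm2q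
  have fd1 : Real.sqrt ((2*π)⁻¹ * (∫ z in Q2, d z ^ 2) + ∫ z in Q2, |2 * d z * pd1 d z|)
      ≤ D + Real.sqrt (2*D*M) := factor_bound hds hds.pd1 (le_refl D) hm1d
  have fd2 : Real.sqrt ((2*π)⁻¹ * (∫ z in Q2, d z ^ 2) + ∫ z in Q2, |2 * d z * pd2 d z|)
      ≤ D + Real.sqrt (2*D*M) := factor_bound hds hds.pd2 (le_refl D) hm2d
  have t1b : |∫ z in Q2, q z * d z * g z| ≤ (P + Real.sqrt (2*P*M)) * (D + Real.sqrt (2*D*M)) * Q := by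
    refine le_trans tri1 (mul3_le (Real.sqrt_nonneg _) (Real.sqrt_nonneg _) (Real.sqrt_nonneg _)
      fq fd1 hng)
  have t2b : |∫ z in Q2, d z * d z * d z|
      ≤ (D + Real.sqrt (2*D*M)) * (D + Real.sqrt (2*D*M)) * D := by
    refine le_trans tri2 (mul3_le (Real.sqrt_nonneg _) (Real.sqrt_nonneg _) (Real.sqrt_nonneg _)
      fd2 fd1 (le_refl D))
  -- key identity and conclusion
  have hid := key_identity hu hper hdf
  have habs : |ipV (pd2V u) (pd2V (advect u u))|
      ≤ |∫ z in Q2, q z * d z * g z| + |∫ z in Q2, d z * d z * d z| := by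
    rw [hid]
    exact abs_add_le _ _
  have hy := young_main ha hP0 hQ0 hM0 hD0 hndP hndQ
  calc |ipV (pd2V u) (pd2V (advect u u))|
      ≤ |∫ z in Q2, q z * d z * g z| + |∫ z in Q2, d z * d z * d z| := habs
    _ ≤ (P + Real.sqrt (2*P*M)) * (D + Real.sqrt (2*D*M)) * Q
        + (D + Real.sqrt (2*D*M)) * (D + Real.sqrt (2*D*M)) * D := add_le_add t1b t2b
    _ ≤ a * M^2 + (6 + 16/a) * (1+P^2) * Q^2 := hy


end Aniso
end
end

section
/- There is a constant C > 0 such that for every smooth function u : 𝕋² → ℝ, ‖u‖²_{L^∞_h(L²_v)} ≤ C ( ‖u‖_{L²} ‖∂₁u‖_{L²} + ‖u‖²_{L²} ). -/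
open MeasureTheory Real Complex Filter Set

noncomputable section

namespace Aniso

/-- Auxiliary: continuity of the horizontal partial derivative of a smooth function. -/
lemma pd1_continuous {u : ℝ × ℝ → ℝ} (hu : Smooth u) : Continuous (pd1 u) := by
  have h : Continuous fun x => fderiv ℝ u x := hu.continuous_fderiv (by simp)
  exact (ContinuousLinearMap.apply ℝ ℝ ((1, 0) : ℝ × ℝ)).continuous.comp h

/-- Auxiliary: continuous functions are integrable on the fundamental square. -/
lemma integrableOn_Q2_s4 {h : ℝ × ℝ → ℝ} (hh : Continuous h) : IntegrableOn h Q2 := by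
  have hsub : Q2 ⊆ Set.Icc (0:ℝ) (2*π) ×ˢ Set.Icc (0:ℝ) (2*π) :=
    Set.prod_mono Set.Ioc_subset_Icc_self Set.Ioc_subset_Icc_self
  exact ((hh.continuousOn).integrableOn_compact (isCompact_Icc.prod isCompact_Icc)).mono_set hsub

/-- Auxiliary: derivative of a horizontal slice of `u²`. -/
lemma slice_deriv {u : ℝ × ℝ → ℝ} (hu : Smooth u) (x2 t : ℝ) :
    HasDerivAt (fun s => u (s, x2) ^ 2) (2 * u (t, x2) * pd1 u (t, x2)) t := by
  have hline : HasDerivAt (fun s : ℝ => (s, x2)) ((1 : ℝ), (0 : ℝ)) t :=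
    (hasDerivAt_id t).prodMk (hasDerivAt_const t x2)
  have hd : HasDerivAt (fun s => u (s, x2)) (pd1 u (t, x2)) t := by
    have := ((hu.differentiable (by simp)) (t, x2)).hasFDerivAt.comp_hasDerivAt t hline
    simpa [pd1, Function.comp_def] using this
  have h2 := hd.fun_pow 2
  simpa [pow_one, mul_comm, mul_assoc, mul_left_comm] using h2

/-- There is `C > 0` such that for every smooth `u : 𝕋² → ℝ`,
`‖u‖²_{L^∞_h(L²_v)} ≤ C (‖u‖_{L²} ‖∂₁u‖_{L²} + ‖u‖²_{L²})`. -/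
theorem LinfhL2v_estimate :
    ∃ C > 0, ∀ u : ℝ × ℝ → ℝ, Smooth u → Per u →
      LinfhL2v u ^ 2 ≤ C * (L2 u * L2 (pd1 u) + L2 u ^ 2) := by
  refine ⟨2, two_pos, ?_⟩
  intro u hu _
  have hπ : (0:ℝ) < 2 * π := by positivity
  have hI2 : I2pi = Set.Ioc (0:ℝ) (2*π) := rfl
  have hQ2 : Q2 = I2pi ×ˢ I2pi := rfl
  have hImeas : MeasurableSet I2pi := hI2 ▸ measurableSet_Ioc
  have hvolfin : volume I2pi < ⊤ := by rw [hI2, Real.volume_Ioc]; exact ENNReal.ofReal_lt_top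
  have hIvol : (volume I2pi).toReal = 2*π := by
    rw [hI2, Real.volume_Ioc, sub_zero, ENNReal.toReal_ofReal hπ.le]
  have hcu : Continuous u := hu.continuous
  have hcp : Continuous (pd1 u) := pd1_continuous hu
  set φ : ℝ × ℝ → ℝ := fun p => 2 * u p * pd1 u p with hφdef
  have hcφ : Continuous φ := (continuous_const.mul hcu).mul hcp
  set J : ℝ := ∫ p in Q2, |φ p| with hJdef
  set S : ℝ := ∫ p in Q2, u p ^ 2 with hSdef
  set F : ℝ → ℝ := fun a => ∫ x2 in I2pi, u (a, x2) ^ 2 with hFdef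
  -- basic integrability on Q2
  have hu2Q : IntegrableOn (fun p => u p ^ 2) Q2 := integrableOn_Q2_s4 (hcu.pow 2)
  have hφQ : IntegrableOn (fun p => |φ p|) Q2 := integrableOn_Q2_s4 hcφ.abs
  -- product measure description
  have hre : (volume.restrict I2pi).prod (volume.restrict I2pi)
      = (volume : Measure (ℝ × ℝ)).restrict Q2 := by
    rw [Measure.prod_restrict, ← MeasureTheory.Measure.volume_eq_prod, ← hQ2]
  have hu2P : Integrable (fun p : ℝ × ℝ => u p ^ 2)
      ((volume.restrict I2pi).prod (volume.restrict I2pi)) := by rw [hre]; exact hu2Q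
  have hφP : Integrable (fun p : ℝ × ℝ => |φ p|)
      ((volume.restrict I2pi).prod (volume.restrict I2pi)) := by rw [hre]; exact hφQ
  -- the vertical marginal of |φ|
  set G : ℝ → ℝ := fun x2 => ∫ x1 in I2pi, |φ (x1, x2)| with hGdef
  have hGint : Integrable G (volume.restrict I2pi) := by
    rw [hGdef]; exact hφP.integral_prod_right
  have hGJ : J = ∫ x2 in I2pi, G x2 := by
    rw [hJdef, hGdef, ← hre, MeasureTheory.integral_prod _ hφP]
    exact MeasureTheory.integral_integral_swap hφP
  have hFint : Integrable F (volume.restrict I2pi) := by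
    rw [hFdef]; exact hu2P.integral_prod_left
  have hFS : ∫ a in I2pi, F a = S := by
    simp only [hFdef, hSdef]
    rw [← hre, MeasureTheory.integral_prod _ hu2P]
  -- slice integrability
  have hsl : ∀ c : ℝ, IntegrableOn (fun x2 => u (c, x2) ^ 2) I2pi := by
    intro c
    have hc : Continuous fun x2 : ℝ => u (c, x2) ^ 2 :=
      (hcu.comp (continuous_const.prodMk continuous_id)).pow 2
    rw [hI2]; exact hc.integrableOn_Ioc
  -- key pointwise-in-a inequality
  have key : ∀ a ∈ I2pi, ∀ b ∈ I2pi, F a ≤ F b + J := by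
    intro a ha b hb
    have hFTC : ∀ x2 : ℝ, u (a, x2) ^ 2 - u (b, x2) ^ 2 = ∫ t in b..a, φ (t, x2) := by
      intro x2
      have hcont : Continuous fun t : ℝ => φ (t, x2) :=
        hcφ.comp (continuous_id.prodMk continuous_const)
      exact (intervalIntegral.integral_eq_sub_of_hasDerivAt
        (f := fun s => u (s, x2) ^ 2) (f' := fun t => φ (t, x2))
        (fun t _ => slice_deriv hu x2 t) (hcont.intervalIntegrable b a)).symm
    have hbound : ∀ x2 : ℝ, u (a, x2) ^ 2 - u (b, x2) ^ 2 ≤ G x2 := by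
      intro x2
      rw [hFTC x2]
      have hcont : Continuous fun t : ℝ => φ (t, x2) :=
        hcφ.comp (continuous_id.prodMk continuous_const)
      have h1 : |∫ t in b..a, φ (t, x2)| ≤ ∫ t in Set.uIoc b a, |φ (t, x2)| := by
        simpa [Real.norm_eq_abs] using
          intervalIntegral.norm_integral_le_integral_norm_uIoc
            (f := fun t => φ (t, x2)) (a := b) (b := a) (μ := volume)
      have hsub : Set.uIoc b a ⊆ I2pi := by
        rw [hI2]
        exact Set.Ioc_subset_Ioc (le_min hb.1.le ha.1.le) (max_le hb.2 ha.2)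
      have h2 : ∫ t in Set.uIoc b a, |φ (t, x2)| ≤ ∫ t in I2pi, |φ (t, x2)| := by
        refine setIntegral_mono_set ?_ ?_ hsub.eventuallyLE
        · rw [hI2]; exact hcont.abs.integrableOn_Ioc
        · exact Filter.Eventually.of_forall fun t => abs_nonneg _
      calc ∫ t in b..a, φ (t, x2) ≤ |∫ t in b..a, φ (t, x2)| := le_abs_self _
        _ ≤ ∫ t in Set.uIoc b a, |φ (t, x2)| := h1
        _ ≤ ∫ t in I2pi, |φ (t, x2)| := h2
        _ = G x2 := by rw [hGdef]
    have hdiff : F a - F b ≤ ∫ x2 in I2pi, G x2 := by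
      have hint : Integrable (fun x2 => u (a, x2) ^ 2 - u (b, x2) ^ 2)
          (volume.restrict I2pi) := (hsl a).sub (hsl b)
      have hmono := MeasureTheory.integral_mono hint hGint hbound
      calc F a - F b = ∫ x2 in I2pi, (u (a, x2) ^ 2 - u (b, x2) ^ 2) := by
            simp only [hFdef]
            rw [MeasureTheory.integral_sub (hsl a) (hsl b)]
        _ ≤ ∫ x2 in I2pi, G x2 := hmono
    linarith [hdiff, hGJ]
  -- averaging in b
  have hJc : IntegrableOn (fun _ : ℝ => J) I2pi := integrableOn_const hvolfin.ne
  have havg : ∀ a ∈ I2pi, F a * (2*π) ≤ S + J * (2*π) := by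
    intro a ha
    have h1 : ∫ _ in I2pi, F a ∂volume = (2*π) * F a := by
      rw [setIntegral_const, measureReal_def, hIvol, smul_eq_mul]
    have h2 : ∫ b in I2pi, (F b + J) ∂volume = S + (2*π) * J := by
      rw [MeasureTheory.integral_add hFint hJc, hFS, setIntegral_const, measureReal_def, hIvol, smul_eq_mul]
    have h3 : ∫ _ in I2pi, F a ∂volume ≤ ∫ b in I2pi, (F b + J) ∂volume := by
      refine setIntegral_mono_on (integrableOn_const hvolfin.ne)
        (hFint.add hJc) hImeas fun b hb => ?_
      have := key a ha b hb; linarith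
    calc F a * (2*π) = (2*π) * F a := mul_comm _ _
      _ = ∫ _ in I2pi, F a ∂volume := h1.symm
      _ ≤ ∫ b in I2pi, (F b + J) ∂volume := h3
      _ = S + (2*π) * J := h2
      _ = S + J * (2*π) := by ring
  -- norms
  have hSnn : 0 ≤ S := by rw [hSdef]; exact integral_nonneg fun p => sq_nonneg _
  have hJnn : 0 ≤ J := by rw [hJdef]; exact integral_nonneg fun p => abs_nonneg _
  have hL2u : L2 u = Real.sqrt S := by rw [hSdef]; rfl
  have hL2p : L2 (pd1 u) = Real.sqrt (∫ p in Q2, pd1 u p ^ 2) := rfl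
  have hL2unn : 0 ≤ L2 u := by rw [hL2u]; exact Real.sqrt_nonneg _
  have hL2pnn : 0 ≤ L2 (pd1 u) := by rw [hL2p]; exact Real.sqrt_nonneg _
  have hS2 : L2 u ^ 2 = S := by rw [hL2u, Real.sq_sqrt hSnn]
  -- Cauchy-Schwarz
  have hCS : J ≤ 2 * (L2 u * L2 (pd1 u)) := by
    have h2exp : Real.HolderConjugate 2 2 := Real.HolderConjugate.two_two
    have h22 : ENNReal.ofReal (2:ℝ) = 2 := by
      rw [show (2:ℝ) = ((2:ℕ):ℝ) by norm_num, ENNReal.ofReal_natCast]; norm_num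
    have hmemu : MemLp (fun p : ℝ × ℝ => |u p|) (ENNReal.ofReal 2) (volume.restrict Q2) := by
      rw [h22]
      exact (memLp_two_iff_integrable_sq hcu.abs.aestronglyMeasurable).2
        (by simpa [_root_.sq_abs, IntegrableOn] using hu2Q)
    have hmemp : MemLp (fun p : ℝ × ℝ => |pd1 u p|) (ENNReal.ofReal 2)
        (volume.restrict Q2) := by
      rw [h22]
      exact (memLp_two_iff_integrable_sq hcp.abs.aestronglyMeasurable).2
        (by simpa [_root_.sq_abs, IntegrableOn, Pi.pow_def] using integrableOn_Q2_s4 (hcp.pow 2))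
    have hmain := MeasureTheory.integral_mul_le_Lp_mul_Lq_of_nonneg h2exp
      (Filter.Eventually.of_forall fun p => abs_nonneg (u p))
      (Filter.Eventually.of_forall fun p => abs_nonneg (pd1 u p)) hmemu hmemp
    have e1 : ∫ p in Q2, |u p| ^ (2:ℝ) = S := by
      rw [hSdef]
      refine integral_congr_ae (Filter.Eventually.of_forall fun p => ?_)
      simp only [Real.rpow_two, _root_.sq_abs]
    have e2 : ∫ p in Q2, |pd1 u p| ^ (2:ℝ) = ∫ p in Q2, pd1 u p ^ 2 := by
      refine integral_congr_ae (Filter.Eventually.of_forall fun p => ?_)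
      simp only [Real.rpow_two, _root_.sq_abs]
    calc J = ∫ p in Q2, 2 * (|u p| * |pd1 u p|) := by
          rw [hJdef]
          refine integral_congr_ae (Filter.Eventually.of_forall fun p => ?_)
          simp only [hφdef, abs_mul]
          rw [_root_.abs_of_nonneg (by norm_num : (0:ℝ) ≤ 2)]
          ring
      _ = 2 * ∫ p in Q2, |u p| * |pd1 u p| := MeasureTheory.integral_const_mul 2 _
      _ ≤ 2 * ((∫ p in Q2, |u p| ^ (2:ℝ)) ^ (1/(2:ℝ)) *
            (∫ p in Q2, |pd1 u p| ^ (2:ℝ)) ^ (1/(2:ℝ))) := by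
          exact mul_le_mul_of_nonneg_left hmain (by norm_num)
      _ = 2 * (L2 u * L2 (pd1 u)) := by
          rw [e1, e2, ← Real.sqrt_eq_rpow, ← Real.sqrt_eq_rpow, ← hL2u, ← hL2p]
  -- pointwise bound for F on I2pi
  have hFB : ∀ a ∈ I2pi, F a ≤ 2 * (L2 u * L2 (pd1 u) + L2 u ^ 2) := by
    intro a ha
    have hdiv : F a ≤ (S + J * (2*π)) / (2*π) := (le_div_iff₀ hπ).2 (havg a ha)
    have heq : (S + J * (2*π)) / (2*π) = S / (2*π) + J := by
      field_simp
    have hSd : S / (2*π) ≤ S := div_le_self hSnn (by nlinarith [Real.pi_gt_three])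
    have hPnn : 0 ≤ L2 u * L2 (pd1 u) := mul_nonneg hL2unn hL2pnn
    rw [heq] at hdiv
    have hFa : F a ≤ S + J := by linarith
    linarith [hS2, hCS, hFa]
  -- essential supremum bound
  have hμne : volume.restrict I2pi ≠ 0 := by
    intro h0
    have hpos : 0 < (volume.restrict I2pi) Set.univ := by
      rw [Measure.restrict_apply_univ, hI2, Real.volume_Ioc, sub_zero]
      exact ENNReal.ofReal_pos.2 hπ
    rw [h0] at hpos
    simp at hpos
  haveI : (ae (volume.restrict I2pi)).NeBot := ae_neBot.2 hμne
  set B : ℝ := 2 * (L2 u * L2 (pd1 u) + L2 u ^ 2) with hBdef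
  have hBnn : 0 ≤ B := by
    have hPnn : 0 ≤ L2 u * L2 (pd1 u) := mul_nonneg hL2unn hL2pnn
    have := sq_nonneg (L2 u)
    rw [hBdef]; linarith
  have hae : ∀ᵐ x1 ∂(volume.restrict I2pi),
      (fun a => Real.sqrt (F a)) x1 ≤ Real.sqrt B := by
    filter_upwards [ae_restrict_mem hImeas] with a ha
    exact Real.sqrt_le_sqrt (hFB a ha)
  have hbdd : Filter.IsBoundedUnder (· ≤ ·) (ae (volume.restrict I2pi))
      (fun a => Real.sqrt (F a)) := ⟨Real.sqrt B, Filter.eventually_map.2 hae⟩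
  have hcobdd : Filter.IsCoboundedUnder (· ≤ ·) (ae (volume.restrict I2pi))
      (fun a => Real.sqrt (F a)) :=
    Filter.IsBoundedUnder.isCoboundedUnder_le
      ⟨0, Filter.eventually_map.2 (Filter.Eventually.of_forall fun a => Real.sqrt_nonneg _)⟩
  have hup : essSup (fun a => Real.sqrt (F a)) (volume.restrict I2pi) ≤ Real.sqrt B :=
    Filter.limsup_le_of_le hcobdd hae
  have hlow : 0 ≤ essSup (fun a => Real.sqrt (F a)) (volume.restrict I2pi) :=
    Filter.le_limsup_of_frequently_le
      ((Filter.Eventually.of_forall fun a => Real.sqrt_nonneg (F a)).frequently) hbdd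
  have hLP : LinfhL2v u = essSup (fun a => Real.sqrt (F a)) (volume.restrict I2pi) := by
    simp only [hFdef]; rfl
  rw [hLP]
  calc essSup (fun a => Real.sqrt (F a)) (volume.restrict I2pi) ^ 2
      ≤ Real.sqrt B ^ 2 := pow_le_pow_left₀ hlow hup 2
    _ = B := Real.sq_sqrt hBnn

end Aniso
end
end
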